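/- arXiv:1809.09573 — 7 statements merged into one kernel-verified Lean document; each statement's English description precedes it below -/
import Mathlib

section
/- Let f : ℝⁿ → ℝ be twice continuously differentiable and let x_opt be a global minimizer of f. Suppose there are constants 0 < α ≤ β such that α·Iₙ ⪯ ∇²f(x) ⪯ β·Iₙ for every x in the ball B_ζ(x_opt) = {x : ‖x − x_opt‖₂ ≤ ζ}, ζ > 0. Then the gradient descent iterates x_{t+1} = x_t − (1/β)·∇f(x_t), started from any x₀ ∈ B_ζ(x_opt), satisfy ‖x_t − x_opt‖₂ ≤ (1 − α/β)ᵗ · ‖x₀ − x_opt‖₂ for all t ≥ 0 (in particular all iterates remain in B_ζ(x_opt)). -/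
/-!
The gradient step `y ↦ y - β⁻¹ • ∇f y` has derivative `1 - β⁻¹ • ∇²f y`, a symmetric operator
whose quadratic form lies between `0` and `(1 - α / β) ‖v‖²` on the ball; for a symmetric
operator this bounds the operator norm by `1 - α / β`. The mean value inequality on the convex
ball then makes the step a `(1 - α / β)`-contraction there, and it fixes `x_opt` since
`∇f x_opt = 0`. Induction keeps the iterates in the ball and gives the geometric rate.
-/

open RealInnerProductSpace Metric

section Operator

variable {E : Type*} [NormedAddCommGroup E] [InnerProductSpace ℝ E]

namespace ContinuousLinearMap

theorem opNorm_le_of_abs_inner_self_le {T : E →L[ℝ] E} (hT : (T : E →ₗ[ℝ] E).IsSymmetric)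
    {c : ℝ} (hc : 0 ≤ c) (h : ∀ v, |⟪T v, v⟫| ≤ c * ‖v‖ ^ 2) : ‖T‖ ≤ c := by
  rw [T.norm_eq_iSup_rayleighQuotient hT]
  refine ciSup_le fun v => ?_
  rcases eq_or_ne v 0 with rfl | hv
  · simpa using hc
  · rw [rayleighQuotient, reApplyInnerSelf_apply, RCLike.re_to_real, abs_div, abs_sq,
      div_le_iff₀ (by positivity)]
    exact h v

theorem norm_id_sub_inv_smul_le {T : E →L[ℝ] E} (hT : (T : E →ₗ[ℝ] E).IsSymmetric)
    {α β : ℝ} (hβ : 0 < β) (hαβ : α ≤ β)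
    (hlow : ∀ v, α * ‖v‖ ^ 2 ≤ ⟪T v, v⟫) (hup : ∀ v, ⟪T v, v⟫ ≤ β * ‖v‖ ^ 2) :
    ‖ContinuousLinearMap.id ℝ E - β⁻¹ • T‖ ≤ 1 - α / β := by
  set S := ContinuousLinearMap.id ℝ E - β⁻¹ • T
  have hc : 0 ≤ 1 - α / β := sub_nonneg.2 ((div_le_one hβ).2 hαβ)
  have hS : ∀ v w, ⟪S v, w⟫ = ⟪v, w⟫ - β⁻¹ * ⟪T v, w⟫ := fun v w => by
    simp only [S, sub_apply, coe_id', id_eq, smul_apply, inner_sub_left, real_inner_smul_left]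
  refine opNorm_le_of_abs_inner_self_le (fun v w => ?_) hc fun v => abs_le.2 ⟨?_, ?_⟩
  · rw [coe_coe, hS, real_inner_comm (S w), hS, hT.apply_clm, real_inner_comm w,
      real_inner_comm (T w)]
  · have hup' := mul_le_mul_of_nonneg_left (hup v) (inv_nonneg.2 hβ.le)
    rw [inv_mul_cancel_left₀ hβ.ne'] at hup'
    rw [hS, real_inner_self_eq_norm_sq]
    nlinarith [mul_nonneg hc (sq_nonneg ‖v‖)]
  · have hlow' := mul_le_mul_of_nonneg_left (hlow v) (inv_nonneg.2 hβ.le)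
    rw [← mul_assoc, inv_mul_eq_div] at hlow'
    rw [hS, real_inner_self_eq_norm_sq]
    linarith

end ContinuousLinearMap

end Operator

section GradientDescent

variable {E : Type*} [NormedAddCommGroup E] [InnerProductSpace ℝ E] [CompleteSpace E]
  {f : E → ℝ}

noncomputable def hessian (f : E → ℝ) (x : E) : E →L[ℝ] E :=
  fderiv ℝ (gradient f) x

noncomputable def gradientStep (f : E → ℝ) (η : ℝ) (x : E) : E :=
  x - η • gradient f x

theorem IsLocalMin.gradient_eq_zero {x : E} (h : IsLocalMin f x) : gradient f x = 0 := by
  simp [gradient, h.fderiv_eq_zero]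

namespace ContDiff

theorem hasFDerivAt_gradient (hf : ContDiff ℝ 2 f) (x : E) :
    HasFDerivAt (gradient f)
      ((InnerProductSpace.toDual ℝ E).symm.toContinuousLinearEquiv.toContinuousLinearMap ∘L
        fderiv ℝ (fderiv ℝ f) x) x :=
  (InnerProductSpace.toDual ℝ E).symm.toContinuousLinearEquiv.hasFDerivAt.comp x
    ((hf.fderiv_right one_add_one_eq_two.le).differentiable one_ne_zero x).hasFDerivAt

theorem hasFDerivAt_hessian (hf : ContDiff ℝ 2 f) (x : E) :
    HasFDerivAt (gradient f) (hessian f x) x :=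
  (hf.hasFDerivAt_gradient x).differentiableAt.hasFDerivAt

theorem inner_hessian_apply (hf : ContDiff ℝ 2 f) (x v w : E) :
    ⟪hessian f x v, w⟫ = iteratedFDeriv ℝ 2 f x ![v, w] := by
  rw [hessian, (hf.hasFDerivAt_gradient x).fderiv, iteratedFDeriv_two_apply]
  exact InnerProductSpace.toDual_symm_apply

theorem isSymmetric_hessian (hf : ContDiff ℝ 2 f) (x : E) :
    (hessian f x : E →ₗ[ℝ] E).IsSymmetric := fun v w => by
  rw [ContinuousLinearMap.coe_coe, real_inner_comm (hessian f x w), hf.inner_hessian_apply,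
    hf.inner_hessian_apply, (hf.contDiffAt.isSymmSndFDerivAt (by simp)).iteratedFDeriv_cons]

end ContDiff

theorem Convex.norm_gradientStep_sub_le {s : Set E} (hs : Convex ℝ s) (hf : ContDiff ℝ 2 f)
    {α β : ℝ} (hβ : 0 < β) (hαβ : α ≤ β)
    (hH : ∀ y ∈ s, ∀ v, α * ‖v‖ ^ 2 ≤ ⟪hessian f y v, v⟫ ∧ ⟪hessian f y v, v⟫ ≤ β * ‖v‖ ^ 2)
    {y z : E} (hy : y ∈ s) (hz : z ∈ s) :
    ‖gradientStep f β⁻¹ y - gradientStep f β⁻¹ z‖ ≤ (1 - α / β) * ‖y - z‖ := by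
  have hderiv : ∀ x, HasFDerivAt (gradientStep f β⁻¹)
      (ContinuousLinearMap.id ℝ E - β⁻¹ • hessian f x) x := fun x =>
    (hasFDerivAt_id x).sub ((hf.hasFDerivAt_hessian x).const_smul β⁻¹)
  refine hs.norm_image_sub_le_of_norm_hasFDerivWithin_le
    (fun x _ => (hderiv x).hasFDerivWithinAt) (fun x hx => ?_) hz hy
  exact (hessian f x).norm_id_sub_inv_smul_le (hf.isSymmetric_hessian x) hβ hαβ
    (fun v => (hH x hx v).1) fun v => (hH x hx v).2

end GradientDescent

theorem norm_sub_le_pow_mul_of_norm_sub_succ_le {F : Type*} [SeminormedAddCommGroup F]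
    {x : ℕ → F} {p : F} {r ζ : ℝ} (hr₀ : 0 ≤ r) (hr₁ : r ≤ 1) (hx₀ : x 0 ∈ closedBall p ζ)
    (hstep : ∀ t, x t ∈ closedBall p ζ → ‖x (t + 1) - p‖ ≤ r * ‖x t - p‖) :
    ∀ t, ‖x t - p‖ ≤ r ^ t * ‖x 0 - p‖ ∧ x t ∈ closedBall p ζ := by
  intro t
  induction t with
  | zero => exact ⟨by simp, hx₀⟩
  | succ t ih =>
    have hle : ‖x (t + 1) - p‖ ≤ r ^ (t + 1) * ‖x 0 - p‖ :=
      calc ‖x (t + 1) - p‖ ≤ r * ‖x t - p‖ := hstep t ih.2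
        _ ≤ r * (r ^ t * ‖x 0 - p‖) := mul_le_mul_of_nonneg_left ih.1 hr₀
        _ = r ^ (t + 1) * ‖x 0 - p‖ := by ring
    refine ⟨hle, mem_closedBall_iff_norm.2 ?_⟩
    calc ‖x (t + 1) - p‖ ≤ r ^ (t + 1) * ‖x 0 - p‖ := hle
      _ ≤ ‖x 0 - p‖ := mul_le_of_le_one_left (norm_nonneg _) (pow_le_one₀ hr₀ hr₁)
      _ ≤ ζ := mem_closedBall_iff_norm.1 hx₀

theorem gd_linear_convergence_strongly_convex_smooth_general
    (n : ℕ) (f : EuclideanSpace ℝ (Fin n) → ℝ) (xopt : EuclideanSpace ℝ (Fin n))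
    (α β ζ : ℝ) (hα : 0 < α) (hαβ : α ≤ β)
    (hf : ContDiff ℝ 2 f)
    (hmin : ∀ y, f xopt ≤ f y)
    (hhess : ∀ x ∈ Metric.closedBall xopt ζ, ∀ v : EuclideanSpace ℝ (Fin n),
      α * ‖v‖ ^ 2 ≤ iteratedFDeriv ℝ 2 f x ![v, v] ∧
      iteratedFDeriv ℝ 2 f x ![v, v] ≤ β * ‖v‖ ^ 2)
    (x : ℕ → EuclideanSpace ℝ (Fin n))
    (hx0 : x 0 ∈ Metric.closedBall xopt ζ)
    (hupd : ∀ t : ℕ, x (t + 1) = x t - (1 / β) • gradient f (x t)) :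
    ∀ t : ℕ, ‖x t - xopt‖ ≤ (1 - α / β) ^ t * ‖x 0 - xopt‖ ∧
      x t ∈ Metric.closedBall xopt ζ := by
  have hβ : 0 < β := hα.trans_le hαβ
  have hxopt : xopt ∈ closedBall xopt ζ := mem_closedBall_self (dist_nonneg.trans hx0)
  have hfix : gradientStep f β⁻¹ xopt = xopt := by
    simp [gradientStep, IsLocalMin.gradient_eq_zero (Filter.Eventually.of_forall hmin)]
  have hH : ∀ y ∈ closedBall xopt ζ, ∀ v, α * ‖v‖ ^ 2 ≤ ⟪hessian f y v, v⟫ ∧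
      ⟪hessian f y v, v⟫ ≤ β * ‖v‖ ^ 2 := by
    simpa only [hf.inner_hessian_apply] using hhess
  refine norm_sub_le_pow_mul_of_norm_sub_succ_le (sub_nonneg.2 ((div_le_one hβ).2 hαβ))
    (sub_le_self _ (div_pos hα hβ).le) hx0 fun t ht => ?_
  calc ‖x (t + 1) - xopt‖ = ‖gradientStep f β⁻¹ (x t) - gradientStep f β⁻¹ xopt‖ := by
        rw [hfix, hupd, gradientStep, one_div]
    _ ≤ (1 - α / β) * ‖x t - xopt‖ :=
        (convex_closedBall xopt ζ).norm_gradientStep_sub_le hf hβ hαβ hH ht hxopt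

/-- **Gradient descent converges linearly for locally strongly convex and smooth functions.**
If `f : ℝⁿ → ℝ` is twice continuously differentiable, `x_opt` is a global minimizer of `f`,
and `α • Iₙ ⪯ ∇²f(x) ⪯ β • Iₙ` (expressed via the Hessian quadratic form) for all `x` in the
ball `B_ζ(x_opt)` with `0 < α ≤ β`, then gradient descent with constant step size `1/β`
started in the ball satisfies `‖x_t − x_opt‖ ≤ (1 − α/β)ᵗ ‖x₀ − x_opt‖` for all `t`
(in particular all iterates remain in the ball). -/
theorem gd_linear_convergence_strongly_convex_smooth
    (n : ℕ) (f : EuclideanSpace ℝ (Fin n) → ℝ) (xopt : EuclideanSpace ℝ (Fin n))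
    (α β ζ : ℝ) (hα : 0 < α) (hαβ : α ≤ β) (hζ : 0 < ζ)
    (hf : ContDiff ℝ 2 f)
    (hmin : ∀ y, f xopt ≤ f y)
    (hhess : ∀ x ∈ Metric.closedBall xopt ζ, ∀ v : EuclideanSpace ℝ (Fin n),
      α * ‖v‖ ^ 2 ≤ iteratedFDeriv ℝ 2 f x ![v, v] ∧
      iteratedFDeriv ℝ 2 f x ![v, v] ≤ β * ‖v‖ ^ 2)
    (x : ℕ → EuclideanSpace ℝ (Fin n))
    (hx0 : x 0 ∈ Metric.closedBall xopt ζ)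
    (hupd : ∀ t : ℕ, x (t + 1) = x t - (1 / β) • gradient f (x t)) :
    ∀ t : ℕ, ‖x t - xopt‖ ≤ (1 - α / β) ^ t * ‖x 0 - xopt‖ ∧
      x t ∈ Metric.closedBall xopt ζ :=
  gd_linear_convergence_strongly_convex_smooth_general n f xopt α β ζ hα hαβ hf hmin hhess x hx0
    hupd
end

section
/- Let x_opt ∈ ℝⁿ, let μ, λ, ζ > 0, and let g : ℝⁿ → ℝⁿ satisfy the regularity condition RC(μ, λ, ζ): for every x with ‖x − x_opt‖₂ ≤ ζ, 2·⟨g(x), x − x_opt⟩ ≥ μ·‖g(x)‖₂² + λ·‖x − x_opt‖₂². Then the iterates x_{t+1} = x_t − μ·g(x_t), started from any x₀ with ‖x₀ − x_opt‖₂ ≤ ζ, satisfy ‖x_t − x_opt‖₂² ≤ (1 − μλ)ᵗ · ‖x₀ − x_opt‖₂² for all t ≥ 0. -/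
/-!
Write `d = x - xopt`. One gradient step replaces `d` by `d - μ g(x)`, and expanding
`‖d - μ g(x)‖² = ‖d‖² - 2μ⟪g(x), d⟫ + μ²‖g(x)‖²` the regularity condition cancels the
`μ²‖g(x)‖²` term and leaves `(1 - μλ)‖d‖²`. Since `1 - μλ ≤ 1`, the step does not leave the
ball where the condition holds, so the contraction iterates.
-/

/-- Unlike `le_geom`, no sign condition on `c`: for `c < 0` the recursion forces `u = 0`. -/
theorem le_geom_of_nonneg {u : ℕ → ℝ} {c : ℝ} (hu : ∀ k, 0 ≤ u k)
    (h : ∀ k, u (k + 1) ≤ c * u k) (n : ℕ) : u n ≤ c ^ n * u 0 := by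
  rcases le_or_gt 0 c with hc | hc
  · exact le_geom hc n fun k _ => h k
  · have hzero : ∀ k, u k = 0 := fun k =>
      le_antisymm (by nlinarith [h k, hu k, hu (k + 1)]) (hu k)
    simp [hzero]

section InnerProductSpace

variable {E : Type*} [NormedAddCommGroup E] [InnerProductSpace ℝ E]

theorem norm_sub_smul_sq_le_of_inner {d v : E} {μ lam : ℝ} (hμ : 0 ≤ μ)
    (h : μ * ‖v‖ ^ 2 + lam * ‖d‖ ^ 2 ≤ 2 * inner ℝ v d) :
    ‖d - μ • v‖ ^ 2 ≤ (1 - μ * lam) * ‖d‖ ^ 2 := by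
  rw [norm_sub_sq_real, norm_smul, real_inner_smul_right, real_inner_comm, Real.norm_eq_abs,
    abs_of_nonneg hμ]
  nlinarith [mul_le_mul_of_nonneg_left h hμ]

def RegularityCondition (g : E → E) (xopt : E) (μ lam ζ : ℝ) : Prop :=
  ∀ x, ‖x - xopt‖ ≤ ζ → μ * ‖g x‖ ^ 2 + lam * ‖x - xopt‖ ^ 2 ≤ 2 * inner ℝ (g x) (x - xopt)

namespace RegularityCondition

variable {g : E → E} {xopt : E} {μ lam ζ : ℝ}

theorem norm_step_sub_sq_le (hg : RegularityCondition g xopt μ lam ζ) (hμ : 0 ≤ μ) {x : E}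
    (hx : ‖x - xopt‖ ≤ ζ) : ‖x - μ • g x - xopt‖ ^ 2 ≤ (1 - μ * lam) * ‖x - xopt‖ ^ 2 := by
  rw [sub_right_comm]
  exact norm_sub_smul_sq_le_of_inner hμ (hg x hx)

theorem norm_step_sub_le (hg : RegularityCondition g xopt μ lam ζ) (hμ : 0 ≤ μ) (hlam : 0 ≤ lam)
    {x : E} (hx : ‖x - xopt‖ ≤ ζ) : ‖x - μ • g x - xopt‖ ≤ ‖x - xopt‖ := by
  rw [← sq_le_sq₀ (norm_nonneg _) (norm_nonneg _)]
  nlinarith [hg.norm_step_sub_sq_le hμ hx, mul_nonneg (mul_nonneg hμ hlam) (sq_nonneg ‖x - xopt‖)]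

theorem norm_iterate_sub_le (hg : RegularityCondition g xopt μ lam ζ) (hμ : 0 ≤ μ)
    (hlam : 0 ≤ lam) {x : ℕ → E} (hx0 : ‖x 0 - xopt‖ ≤ ζ)
    (hupd : ∀ t, x (t + 1) = x t - μ • g (x t)) (t : ℕ) : ‖x t - xopt‖ ≤ ζ := by
  induction t with
  | zero => exact hx0
  | succ t ih => exact hupd t ▸ (hg.norm_step_sub_le hμ hlam ih).trans ih

end RegularityCondition

end InnerProductSpace

theorem convergence_under_regularity_condition_general
    (n : ℕ) (g : EuclideanSpace ℝ (Fin n) → EuclideanSpace ℝ (Fin n))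
    (xopt : EuclideanSpace ℝ (Fin n)) (μ lam ζ : ℝ)
    (hμ : 0 < μ) (hlam : 0 < lam)
    (hRC : ∀ x : EuclideanSpace ℝ (Fin n), ‖x - xopt‖ ≤ ζ →
      2 * (inner ℝ (g x) (x - xopt) : ℝ) ≥ μ * ‖g x‖ ^ 2 + lam * ‖x - xopt‖ ^ 2)
    (x : ℕ → EuclideanSpace ℝ (Fin n))
    (hx0 : ‖x 0 - xopt‖ ≤ ζ)
    (hupd : ∀ t : ℕ, x (t + 1) = x t - μ • g (x t)) :
    ∀ t : ℕ, ‖x t - xopt‖ ^ 2 ≤ (1 - μ * lam) ^ t * ‖x 0 - xopt‖ ^ 2 := by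
  have hg : RegularityCondition g xopt μ lam ζ := hRC
  have hball := hg.norm_iterate_sub_le hμ.le hlam.le hx0 hupd
  refine le_geom_of_nonneg (fun t => sq_nonneg _) fun t => ?_
  rw [hupd t]
  exact hg.norm_step_sub_sq_le hμ.le (hball t)

/-- **Linear convergence under the regularity condition RC(μ, λ, ζ).**
If `g : ℝⁿ → ℝⁿ` satisfies `2⟨g(x), x − x_opt⟩ ≥ μ‖g(x)‖² + λ‖x − x_opt‖²` for all `x` in the
ball of radius `ζ` around `x_opt`, then the iterates `x_{t+1} = x_t − μ g(x_t)` started in that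
ball satisfy `‖x_t − x_opt‖² ≤ (1 − μλ)ᵗ ‖x₀ − x_opt‖²` for all `t`. -/
theorem convergence_under_regularity_condition
    (n : ℕ) (g : EuclideanSpace ℝ (Fin n) → EuclideanSpace ℝ (Fin n))
    (xopt : EuclideanSpace ℝ (Fin n)) (μ lam ζ : ℝ)
    (hμ : 0 < μ) (hlam : 0 < lam) (hζ : 0 < ζ)
    (hRC : ∀ x : EuclideanSpace ℝ (Fin n), ‖x - xopt‖ ≤ ζ →
      2 * (inner ℝ (g x) (x - xopt) : ℝ) ≥ μ * ‖g x‖ ^ 2 + lam * ‖x - xopt‖ ^ 2)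
    (x : ℕ → EuclideanSpace ℝ (Fin n))
    (hx0 : ‖x 0 - xopt‖ ≤ ζ)
    (hupd : ∀ t : ℕ, x (t + 1) = x t - μ • g (x t)) :
    ∀ t : ℕ, ‖x t - xopt‖ ^ 2 ≤ (1 - μ * lam) ^ t * ‖x 0 - xopt‖ ^ 2 :=
  convergence_under_regularity_condition_general n g xopt μ lam ζ hμ hlam hRC x hx0 hupd
end

section
/- Let M ∈ ℝⁿˣⁿ be symmetric positive semidefinite with eigendecomposition M = Σᵢ λᵢ·uᵢuᵢᵀ, where λ₁ > λ₂ ≥ … ≥ λₙ ≥ 0 and u₁, …, uₙ are orthonormal eigenvectors, and let f(x) = (1/4)·‖xxᵀ − M‖_F². Suppose the constant step size η_t ≡ 1/(4.5·λ₁) is used and the initial point satisfies ‖x₀ − √λ₁·u₁‖₂ ≤ (λ₁ − λ₂)/(15·√λ₁). Then the gradient descent iterates x_{t+1} = x_t − η_t·∇f(x_t) obey ‖x_t − √λ₁·u₁‖₂ ≤ (1 − (λ₁ − λ₂)/(18·λ₁))ᵗ · ‖x₀ − √λ₁·u₁‖₂ for all t ≥ 0. -/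
open Matrix

/-- The Euclidean (ℓ₂) norm of a vector in `ℝⁿ`. -/
noncomputable def l2norm {p : ℕ} (v : Fin p → ℝ) : ℝ :=
  Real.sqrt (∑ i, v i ^ 2)

/-!
In the coordinates `U = (u₁ ⋯ uₙ)ᵀ` of the eigenbasis, gradient descent for `M` becomes
gradient descent for `diag λ`, and `U` preserves the Euclidean norm. Writing an iterate as
`√λ₁ e₁ + e`, one step sends the error `e` to
`D e - η (2√λ₁ e₁ᵀe + ‖e‖²) e - η ‖e‖² √λ₁ e₁`,
where the diagonal `D` has entries `1 - 2ηλ₁` and `1 - η(λ₁ - λᵢ)`, all in `[0, 1 - ηΔ]`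
for `Δ = λ₁ - λ₂`. So `‖e‖` shrinks by the factor `1 - η(Δ - 3√λ₁‖e‖ - ‖e‖²)`, which is at
most `1 - Δ/(18λ₁)` as long as `‖e‖ ≤ Δ/(15√λ₁)`; hence the error never leaves that ball.
-/

lemma l2norm_eq_norm {p : ℕ} (v : Fin p → ℝ) : l2norm v = ‖WithLp.toLp 2 v‖ := by
  simp [l2norm, EuclideanSpace.norm_eq]

lemma l2norm_eq_sqrt_dotProduct {p : ℕ} (v : Fin p → ℝ) : l2norm v = √(v ⬝ᵥ v) := by
  simp [l2norm, dotProduct, sq]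

lemma l2norm_nonneg {p : ℕ} (v : Fin p → ℝ) : 0 ≤ l2norm v := Real.sqrt_nonneg _

lemma dotProduct_self_eq_l2norm_sq {p : ℕ} (v : Fin p → ℝ) : v ⬝ᵥ v = l2norm v ^ 2 := by
  rw [l2norm, Real.sq_sqrt (by positivity)]
  simp [dotProduct, sq]

lemma l2norm_sub_le {p : ℕ} (v w : Fin p → ℝ) : l2norm (v - w) ≤ l2norm v + l2norm w := by
  simpa only [l2norm_eq_norm, WithLp.toLp_sub] using norm_sub_le _ _

lemma l2norm_smul {p : ℕ} (c : ℝ) (v : Fin p → ℝ) : l2norm (c • v) = |c| * l2norm v := by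
  simp only [l2norm_eq_norm, WithLp.toLp_smul, norm_smul, Real.norm_eq_abs]

lemma l2norm_single {p : ℕ} (i : Fin p) : l2norm (Pi.single i 1) = 1 := by
  simp [l2norm_eq_norm]

lemma abs_le_l2norm {p : ℕ} (v : Fin p → ℝ) (i : Fin p) : |v i| ≤ l2norm v := by
  simpa [l2norm_eq_norm] using PiLp.norm_apply_le (WithLp.toLp 2 v) i

lemma l2norm_mul_le {p : ℕ} {d : Fin p → ℝ} {K : ℝ} (hK : 0 ≤ K) (hd : ∀ i, |d i| ≤ K)
    (v : Fin p → ℝ) : l2norm (d * v) ≤ K * l2norm v := by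
  rw [l2norm, l2norm, ← Real.sqrt_sq hK, ← Real.sqrt_mul (sq_nonneg K), Finset.mul_sum]
  gcongr with i
  rw [Pi.mul_apply, mul_pow, ← sq_abs (d i)]
  gcongr
  exact hd i

def gdStep {m R : Type*} [Fintype m] [CommRing R] (η : R) (M : Matrix m m R) (x : m → R) : m → R :=
  x - η • ((vecMulVec x x - M) *ᵥ x)

lemma sum_smul_vecMulVec_self {m R ι : Type*} [Fintype m] [CommRing R] [Fintype ι] [DecidableEq ι]
    (lam : ι → R) (u : ι → m → R) :
    ∑ i, lam i • vecMulVec (u i) (u i) = (of u)ᵀ * diagonal lam * of u := by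
  ext a b
  simp only [Matrix.sum_apply, Matrix.smul_apply, vecMulVec_apply, smul_eq_mul, mul_apply,
    transpose_apply, of_apply, diagonal_apply, mul_ite, mul_zero, Finset.sum_ite_eq',
    Finset.mem_univ, ↓reduceIte]
  exact Finset.sum_congr rfl fun i _ => by ring

section ChangeOfBasis

variable {m R : Type*} [Fintype m] [DecidableEq m] [CommRing R]

lemma mulVec_gdStep {U : Matrix m m R} (hU : Uᵀ * U = 1) (η : R) (M : Matrix m m R)
    (x : m → R) : U *ᵥ gdStep η M x = gdStep η (U * M * Uᵀ) (U *ᵥ x) := by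
  have conj : ∀ A : Matrix m m R, U *ᵥ (A *ᵥ x) = (U * A * Uᵀ) *ᵥ (U *ᵥ x) := by
    intro A
    rw [mulVec_mulVec, mulVec_mulVec, Matrix.mul_assoc (U * A), hU, Matrix.mul_one]
  rw [gdStep, gdStep, mulVec_sub, mulVec_smul, conj, Matrix.mul_sub, Matrix.sub_mul,
    mul_vecMulVec, vecMulVec_mul, vecMul_transpose]

variable {u : m → m → R}

lemma of_mul_transpose_eq_one (hu : ∀ i j, u i ⬝ᵥ u j = if i = j then 1 else 0) :
    of u * (of u)ᵀ = 1 := by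
  ext i j
  simpa [mul_apply, dotProduct, one_apply] using hu i j

lemma of_mulVec_self (hu : ∀ i j, u i ⬝ᵥ u j = if i = j then 1 else 0) (i : m) :
    of u *ᵥ u i = Pi.single i 1 := by
  ext j
  simpa [mulVec, Pi.single_apply] using hu j i

lemma of_mulVec_gdStep_sub (hu : ∀ i j, u i ⬝ᵥ u j = if i = j then 1 else 0) (lam : m → R)
    (η r : R) (i₀ : m) (x : m → R) :
    of u *ᵥ (gdStep η (∑ i, lam i • vecMulVec (u i) (u i)) x - r • u i₀) =
      gdStep η (diagonal lam) (r • Pi.single i₀ 1 + of u *ᵥ (x - r • u i₀))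
        - r • Pi.single i₀ 1 := by
  have hUUt := of_mul_transpose_eq_one hu
  have hdiag : of u * (∑ i, lam i • vecMulVec (u i) (u i)) * (of u)ᵀ = diagonal lam := by
    rw [sum_smul_vecMulVec_self, Matrix.mul_assoc, Matrix.mul_assoc, Matrix.mul_assoc, hUUt,
      Matrix.mul_one, ← Matrix.mul_assoc, hUUt, Matrix.one_mul]
  rw [mulVec_sub, mulVec_sub, mulVec_smul, of_mulVec_self hu, add_sub_cancel,
    mulVec_gdStep (mul_eq_one_comm.mp hUUt), hdiag]

end ChangeOfBasis

lemma l2norm_mulVec {p : ℕ} {U : Matrix (Fin p) (Fin p) ℝ} (hU : Uᵀ * U = 1) (v : Fin p → ℝ) :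
    l2norm (U *ᵥ v) = l2norm v := by
  rw [l2norm_eq_sqrt_dotProduct, l2norm_eq_sqrt_dotProduct, dotProduct_mulVec,
    ← mulVec_transpose, mulVec_mulVec, hU, one_mulVec]

lemma gdStep_diagonal_sub_eq {m R : Type*} [Fintype m] [DecidableEq m] [CommRing R]
    {lam : m → R} {i₀ : m} {r : R} (hr : r ^ 2 = lam i₀) (η : R) (e : m → R) :
    gdStep η (diagonal lam) (r • Pi.single i₀ 1 + e) - r • Pi.single i₀ 1 =
      (fun i => if i = i₀ then 1 - 2 * η * lam i₀ else 1 - η * (lam i₀ - lam i)) * e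
        - (η * (2 * r * e i₀ + e ⬝ᵥ e)) • e - (η * (e ⬝ᵥ e) * r) • Pi.single i₀ 1 := by
  have hsq : (r • Pi.single i₀ 1 + e) ⬝ᵥ (r • Pi.single i₀ 1 + e) =
      lam i₀ + (2 * r * e i₀ + e ⬝ᵥ e) := by
    simp only [add_dotProduct, dotProduct_add, smul_dotProduct, dotProduct_smul,
      single_one_dotProduct, dotProduct_single_one, dotProduct_comm e, ← hr]
    simp only [Pi.add_apply, Pi.smul_apply, Pi.single_eq_same, smul_eq_mul, mul_one]
    ring
  ext i
  simp only [gdStep, sub_mulVec, vecMulVec_mulVec, hsq, MulOpposite.smul_eq_mul_unop,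
    MulOpposite.unop_op, mulVec_diagonal, Pi.sub_apply, Pi.add_apply, Pi.smul_apply, Pi.mul_apply,
    Pi.single_apply, smul_eq_mul, mul_ite, mul_one, mul_zero, ite_mul]
  split_ifs with h
  · subst h; linear_combination (-2 * η * e i) * hr
  · ring

lemma l2norm_gdStep_diagonal_sub_le {p : ℕ} {lam : Fin p → ℝ} {i₀ : Fin p} {r η Δ : ℝ}
    (hr0 : 0 ≤ r) (hr : r ^ 2 = lam i₀) (hη : 0 ≤ η) (hηL : η * lam i₀ ≤ 1 / 2)
    (hΔ : Δ ≤ 2 * lam i₀) (hlam : ∀ i ≠ i₀, 0 ≤ lam i ∧ lam i ≤ lam i₀ - Δ) (e : Fin p → ℝ) :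
    l2norm (gdStep η (diagonal lam) (r • Pi.single i₀ 1 + e) - r • Pi.single i₀ 1)
      ≤ (1 - η * (Δ - 3 * r * l2norm e - l2norm e ^ 2)) * l2norm e := by
  rw [gdStep_diagonal_sub_eq hr]
  set ε := l2norm e
  have hε : 0 ≤ ε := l2norm_nonneg e
  have hηΔ : η * Δ ≤ 1 := by nlinarith
  have hdiag : ∀ i, |if i = i₀ then 1 - 2 * η * lam i₀ else 1 - η * (lam i₀ - lam i)|
      ≤ 1 - η * Δ := by
    intro i
    split_ifs with h
    · rw [abs_le]; constructor <;> nlinarith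
    · obtain ⟨h0, hΔi⟩ := hlam i h
      rw [abs_le]; constructor <;> nlinarith
  have hs : |2 * r * e i₀ + e ⬝ᵥ e| ≤ 2 * r * ε + ε ^ 2 := by
    rw [dotProduct_self_eq_l2norm_sq]
    calc |2 * r * e i₀ + ε ^ 2| ≤ |2 * r * e i₀| + |ε ^ 2| := abs_add_le _ _
      _ = 2 * r * |e i₀| + ε ^ 2 := by
          rw [abs_mul, abs_of_nonneg (by positivity : 0 ≤ 2 * r), abs_of_nonneg (sq_nonneg ε)]
      _ ≤ 2 * r * ε + ε ^ 2 := by gcongr; exact abs_le_l2norm e i₀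
  calc _ ≤ (1 - η * Δ) * ε + η * (2 * r * ε + ε ^ 2) * ε + η * ε ^ 2 * r := by
        refine (l2norm_sub_le _ _).trans (add_le_add ((l2norm_sub_le _ _).trans
          (add_le_add (l2norm_mul_le (by linarith) hdiag e) ?_)) ?_)
        · rw [l2norm_smul, abs_mul, abs_of_nonneg hη]; gcongr
        · rw [l2norm_smul, l2norm_single, dotProduct_self_eq_l2norm_sq,
            abs_of_nonneg (by positivity), mul_one, mul_right_comm]
    _ = (1 - η * (Δ - 3 * r * ε - ε ^ 2)) * ε := by ring

lemma gd_contraction_factor_le {L Δ ε : ℝ} (hL : 0 < L) (hΔL : Δ ≤ L) (hε : 0 ≤ ε)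
    (hsmall : ε ≤ Δ / (15 * √L)) :
    (1 - 1 / (4.5 * L) * (Δ - 3 * √L * ε - ε ^ 2)) * ε ≤ (1 - Δ / (18 * L)) * ε := by
  have hr0 : 0 < √L := Real.sqrt_pos.mpr hL
  have hr : √L ^ 2 = L := Real.sq_sqrt hL.le
  have hrε : 15 * √L * ε ≤ Δ := by rwa [le_div_iff₀ (by positivity), mul_comm] at hsmall
  -- `(15 √L ε)² ≤ Δ² ≤ Δ L`
  have hε2 : 225 * ε ^ 2 ≤ Δ := by nlinarith
  have hcoef : 1 / (4.5 * L) * (Δ - 3 * √L * ε - ε ^ 2)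
      = 4 * (Δ - 3 * √L * ε - ε ^ 2) / (18 * L) := by
    field_simp; ring
  gcongr
  rw [hcoef]
  gcongr
  nlinarith

lemma le_pow_mul_of_step_le {a : ℕ → ℝ} {ρ R : ℝ} (hρ0 : 0 ≤ ρ) (hρ1 : ρ ≤ 1) (ha0 : 0 ≤ a 0)
    (hR : a 0 ≤ R) (hstep : ∀ t, a t ≤ R → a (t + 1) ≤ ρ * a t) (t : ℕ) : a t ≤ ρ ^ t * a 0 := by
  induction t with
  | zero => simp
  | succ t ih =>
    have hR' : a t ≤ R := ih.trans ((mul_le_of_le_one_left ha0 (pow_le_one₀ hρ0 hρ1)).trans hR)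
    calc a (t + 1) ≤ ρ * a t := hstep t hR'
      _ ≤ ρ * (ρ ^ t * a 0) := by gcongr
      _ = ρ ^ (t + 1) * a 0 := by ring

/-- **Local linear convergence of gradient descent for rank-1 matrix factorization.**
Let `M = ∑ᵢ λᵢ uᵢuᵢᵀ` be symmetric PSD with `λ₁ > λ₂ ≥ … ≥ λₙ ≥ 0` and orthonormal
eigenvectors `uᵢ`, and `f(x) = ¼‖xxᵀ − M‖_F²` with gradient `∇f(x) = (xxᵀ − M)x`.
If the step size is `η ≡ 1/(4.5 λ₁)` and `‖x₀ − √λ₁ u₁‖₂ ≤ (λ₁ − λ₂)/(15√λ₁)`, then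
gradient descent satisfies
`‖x_t − √λ₁ u₁‖₂ ≤ (1 − (λ₁ − λ₂)/(18 λ₁))ᵗ ‖x₀ − √λ₁ u₁‖₂` for all `t ≥ 0`. -/
theorem gd_rank_one_matrix_factorization_local_convergence
    (n : ℕ) (hn : 1 < n)
    (M : Matrix (Fin n) (Fin n) ℝ)
    (lam : Fin n → ℝ) (u : Fin n → (Fin n → ℝ))
    (horth : ∀ i j : Fin n, dotProduct (u i) (u j) = if i = j then 1 else 0)
    (hdecomp : M = ∑ i, lam i • Matrix.vecMulVec (u i) (u i))
    (hmono : Antitone lam)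
    (hnonneg : ∀ i, 0 ≤ lam i)
    (hgap : lam ⟨1, hn⟩ < lam ⟨0, by omega⟩)
    (x : ℕ → (Fin n → ℝ)) (η : ℝ)
    (hη : η = 1 / (4.5 * lam ⟨0, by omega⟩))
    (hinit : l2norm (x 0 - Real.sqrt (lam ⟨0, by omega⟩) • u ⟨0, by omega⟩)
      ≤ (lam ⟨0, by omega⟩ - lam ⟨1, hn⟩) / (15 * Real.sqrt (lam ⟨0, by omega⟩)))
    (hupd : ∀ t : ℕ, x (t + 1) =
      x t - η • Matrix.mulVec (Matrix.vecMulVec (x t) (x t) - M) (x t)) :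
    ∀ t : ℕ, l2norm (x t - Real.sqrt (lam ⟨0, by omega⟩) • u ⟨0, by omega⟩)
      ≤ (1 - (lam ⟨0, by omega⟩ - lam ⟨1, hn⟩) / (18 * lam ⟨0, by omega⟩)) ^ t *
        l2norm (x 0 - Real.sqrt (lam ⟨0, by omega⟩) • u ⟨0, by omega⟩) := by
  subst hη
  set i₀ : Fin n := ⟨0, by omega⟩
  set i₁ : Fin n := ⟨1, hn⟩
  set r := √(lam i₀)
  have hL : 0 < lam i₀ := (hnonneg i₁).trans_lt hgap
  have hΔL : lam i₀ - lam i₁ ≤ lam i₀ := by linarith [hnonneg i₁]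
  have hlam : ∀ i ≠ i₀, 0 ≤ lam i ∧ lam i ≤ lam i₀ - (lam i₀ - lam i₁) := fun i hi =>
    ⟨hnonneg i, by linarith [hmono (Fin.le_def.mpr (Nat.one_le_iff_ne_zero.mpr
      fun h => hi (Fin.ext h)) : i₁ ≤ i)]⟩
  have hU : (of u)ᵀ * of u = 1 := mul_eq_one_comm.mp (of_mul_transpose_eq_one horth)
  have hcoord : ∀ t, of u *ᵥ (x (t + 1) - r • u i₀) = gdStep (1 / (4.5 * lam i₀)) (diagonal lam)
      (r • Pi.single i₀ 1 + of u *ᵥ (x t - r • u i₀)) - r • Pi.single i₀ 1 := fun t => by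
    rw [hupd t, hdecomp]
    exact of_mulVec_gdStep_sub horth lam _ r i₀ (x t)
  refine le_pow_mul_of_step_le ?_ ?_ (l2norm_nonneg _) hinit fun t ht => ?_
  · exact sub_nonneg.mpr ((div_le_one (by positivity)).mpr (by linarith))
  · exact sub_le_self _ (div_nonneg (by linarith) (by positivity))
  · rw [← l2norm_mulVec hU] at ht
    rw [← l2norm_mulVec hU (x t - _), ← l2norm_mulVec hU, hcoord]
    refine (l2norm_gdStep_diagonal_sub_le (Real.sqrt_nonneg _) (Real.sq_sqrt hL.le)
      (by positivity) ?_ (by linarith) hlam _).trans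
      (gd_contraction_factor_le hL hΔL (l2norm_nonneg _) ht)
    field_simp; norm_num
end

section
/- Let 𝒜 : ℝ^{n₁×n₂} → ℝᵐ be a linear operator satisfying the 2r-RIP with RIP constant δ_{2r} < 1. Then for all matrices X, Y ∈ ℝ^{n₁×n₂} each of rank at most r, |⟨𝒜(X), 𝒜(Y)⟩ − ⟨X, Y⟩| ≤ δ_{2r}·‖X‖_F·‖Y‖_F, where ⟨X, Y⟩ = Tr(XᵀY). -/
/-
The usual polarization argument. Writing `⟨X, Y⟩` through `‖X ± Y‖²` on both sides and using the
RIP on `X ± Y` (rank at most `2r`) together with the parallelogram law gives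
`|⟨𝒜X, 𝒜Y⟩ − ⟨X, Y⟩| ≤ δ (‖X‖² + ‖Y‖²) / 2`; applied to `X / ‖X‖` and `Y / ‖Y‖` this becomes
`δ ‖X‖ ‖Y‖`. Only norms and inner products enter, so `⟨X, Y⟩` and `‖X‖_F` are read through the
vectorization of matrices into `EuclideanSpace ℝ (Fin n₁ × Fin n₂)`, which plays the role of the
reference map `B` against which `A = 𝒜` is compared.
-/

open Matrix

/-- The Frobenius norm of a real matrix. -/
noncomputable def frobNorm {p q : ℕ} (A : Matrix (Fin p) (Fin q) ℝ) : ℝ :=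
  Real.sqrt (∑ i, ∑ j, (A i j) ^ 2)

/-- The trace inner product `⟨X, Y⟩ = Tr(XᵀY)` of two real matrices. -/
def mip {p q : ℕ} (A B : Matrix (Fin p) (Fin q) ℝ) : ℝ :=
  Matrix.trace (Aᵀ * B)

section NearIsometry

variable {M E F : Type*} [AddCommGroup M] [Module ℝ M]
  [NormedAddCommGroup E] [InnerProductSpace ℝ E] [NormedAddCommGroup F] [InnerProductSpace ℝ F]
  (A : M →ₗ[ℝ] F) (B : M →ₗ[ℝ] E) {δ : ℝ}

theorem abs_inner_sub_inner_le_of_add_of_sub {u v : M}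
    (hadd : (1 - δ) * ‖B (u + v)‖ ^ 2 ≤ ‖A (u + v)‖ ^ 2 ∧
      ‖A (u + v)‖ ^ 2 ≤ (1 + δ) * ‖B (u + v)‖ ^ 2)
    (hsub : (1 - δ) * ‖B (u - v)‖ ^ 2 ≤ ‖A (u - v)‖ ^ 2 ∧
      ‖A (u - v)‖ ^ 2 ≤ (1 + δ) * ‖B (u - v)‖ ^ 2) :
    |inner ℝ (A u) (A v) - inner ℝ (B u) (B v)| ≤ δ / 2 * (‖B u‖ ^ 2 + ‖B v‖ ^ 2) := by
  simp only [map_add, map_sub, norm_add_sq_real, norm_sub_sq_real] at hadd hsub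
  rw [abs_le]
  constructor <;> linarith [hadd.1, hadd.2, hsub.1, hsub.2]

theorem abs_inner_sub_inner_le_mul_norm {u v : M}
    (hRIP : ∀ s t : ℝ, (1 - δ) * ‖B (s • u + t • v)‖ ^ 2 ≤ ‖A (s • u + t • v)‖ ^ 2 ∧
      ‖A (s • u + t • v)‖ ^ 2 ≤ (1 + δ) * ‖B (s • u + t • v)‖ ^ 2) :
    |inner ℝ (A u) (A v) - inner ℝ (B u) (B v)| ≤ δ * ‖B u‖ * ‖B v‖ := by
  rcases eq_or_ne (B u) 0 with hu | hu
  · have hAu : A u = 0 := by simpa [hu] using (hRIP 1 0).2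
    simp [hu, hAu]
  rcases eq_or_ne (B v) 0 with hv | hv
  · have hAv : A v = 0 := by simpa [hv] using (hRIP 0 1).2
    simp [hv, hAv]
  have ha : 0 < ‖B u‖ := norm_pos_iff.mpr hu
  have hb : 0 < ‖B v‖ := norm_pos_iff.mpr hv
  have hunit := abs_inner_sub_inner_le_of_add_of_sub A B (u := ‖B u‖⁻¹ • u) (v := ‖B v‖⁻¹ • v)
    (hRIP _ _) (by simpa only [sub_eq_add_neg, neg_smul] using hRIP ‖B u‖⁻¹ (-‖B v‖⁻¹))
  simp only [map_smul, norm_smul, real_inner_smul_left, real_inner_smul_right, norm_inv, norm_norm,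
    inv_mul_cancel₀ ha.ne', inv_mul_cancel₀ hb.ne', ← mul_sub, abs_mul, abs_inv, abs_norm] at hunit
  calc |inner ℝ (A u) (A v) - inner ℝ (B u) (B v)|
      = ‖B u‖ * ‖B v‖ * (‖B u‖⁻¹ * (‖B v‖⁻¹ * |inner ℝ (A u) (A v) - inner ℝ (B u) (B v)|)) := by
        field_simp
    _ ≤ ‖B u‖ * ‖B v‖ * δ := by gcongr; linarith
    _ = δ * ‖B u‖ * ‖B v‖ := by ring

end NearIsometry

namespace Matrix

variable {m n K : Type*} [Fintype n] [Field K]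

theorem rank_add_le (A B : Matrix m n K) : (A + B).rank ≤ A.rank + B.rank := by
  rw [rank, rank, rank, mulVecLin_add]
  calc Module.finrank K (LinearMap.range (A.mulVecLin + B.mulVecLin))
      ≤ Module.finrank K ↥(LinearMap.range A.mulVecLin ⊔ LinearMap.range B.mulVecLin) :=
        Submodule.finrank_mono (LinearMap.range_add_le _ _)
    _ ≤ _ := Submodule.finrank_add_le_finrank_add_finrank _ _

theorem rank_smul_le (c : K) (A : Matrix m n K) : (c • A).rank ≤ A.rank := by
  have : (c • A).mulVecLin = c • A.mulVecLin := by ext; simp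
  rw [rank, rank, this]
  exact Submodule.finrank_mono (LinearMap.range_smul_le_range _ _)

theorem rank_smul_add_smul_le (s t : K) (A B : Matrix m n K) :
    (s • A + t • B).rank ≤ A.rank + B.rank :=
  (rank_add_le _ _).trans (add_le_add (rank_smul_le s A) (rank_smul_le t B))

end Matrix

def frobVec {p q : ℕ} : Matrix (Fin p) (Fin q) ℝ →ₗ[ℝ] EuclideanSpace ℝ (Fin p × Fin q) where
  toFun A := WithLp.toLp 2 fun ij => A ij.1 ij.2
  map_add' _ _ := rfl
  map_smul' _ _ := rfl

@[simp]
theorem frobVec_apply {p q : ℕ} (A : Matrix (Fin p) (Fin q) ℝ) (ij : Fin p × Fin q) :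
    frobVec A ij = A ij.1 ij.2 :=
  rfl

theorem norm_frobVec {p q : ℕ} (A : Matrix (Fin p) (Fin q) ℝ) : ‖frobVec A‖ = frobNorm A := by
  simp [EuclideanSpace.norm_eq, frobNorm, Fintype.sum_prod_type]

theorem inner_frobVec {p q : ℕ} (A B : Matrix (Fin p) (Fin q) ℝ) :
    inner ℝ (frobVec A) (frobVec B) = mip A B := by
  simp only [PiLp.inner_apply, frobVec_apply, Fintype.sum_prod_type, RCLike.inner_apply,
    conj_trivial, mip, trace, diag, mul_apply, transpose_apply]
  rw [Finset.sum_comm]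
  simp_rw [mul_comm]

theorem rip_inner_product_preservation_general
    (n₁ n₂ m r : ℕ)
    (𝒜 : Matrix (Fin n₁) (Fin n₂) ℝ →ₗ[ℝ] EuclideanSpace ℝ (Fin m))
    (δ : ℝ)
    (hRIP : ∀ X : Matrix (Fin n₁) (Fin n₂) ℝ, X.rank ≤ 2 * r →
      (1 - δ) * frobNorm X ^ 2 ≤ ‖𝒜 X‖ ^ 2 ∧ ‖𝒜 X‖ ^ 2 ≤ (1 + δ) * frobNorm X ^ 2) :
    ∀ X Y : Matrix (Fin n₁) (Fin n₂) ℝ, X.rank ≤ r → Y.rank ≤ r →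
      |(inner ℝ (𝒜 X) (𝒜 Y) : ℝ) - mip X Y| ≤ δ * frobNorm X * frobNorm Y := by
  intro X Y hX hY
  have hRIP' : ∀ s t : ℝ, (1 - δ) * ‖frobVec (s • X + t • Y)‖ ^ 2 ≤ ‖𝒜 (s • X + t • Y)‖ ^ 2 ∧
      ‖𝒜 (s • X + t • Y)‖ ^ 2 ≤ (1 + δ) * ‖frobVec (s • X + t • Y)‖ ^ 2 := fun s t => by
    rw [norm_frobVec]
    exact hRIP _ ((rank_smul_add_smul_le s t X Y).trans (by omega))
  simpa only [inner_frobVec, norm_frobVec] using abs_inner_sub_inner_le_mul_norm 𝒜 frobVec hRIP'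

/-- **Near-isometry of the inner product under the restricted isometry property.**
If a linear operator `𝒜 : ℝ^{n₁×n₂} → ℝᵐ` satisfies the `2r`-RIP with constant `δ_{2r} < 1`,
then for all matrices `X, Y` of rank at most `r`,
`|⟨𝒜(X), 𝒜(Y)⟩ − ⟨X, Y⟩| ≤ δ_{2r} ‖X‖_F ‖Y‖_F`. -/
theorem rip_inner_product_preservation
    (n₁ n₂ m r : ℕ)
    (𝒜 : Matrix (Fin n₁) (Fin n₂) ℝ →ₗ[ℝ] EuclideanSpace ℝ (Fin m))
    (δ : ℝ) (hδ : δ < 1)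
    (hRIP : ∀ X : Matrix (Fin n₁) (Fin n₂) ℝ, X.rank ≤ 2 * r →
      (1 - δ) * frobNorm X ^ 2 ≤ ‖𝒜 X‖ ^ 2 ∧ ‖𝒜 X‖ ^ 2 ≤ (1 + δ) * frobNorm X ^ 2) :
    ∀ X Y : Matrix (Fin n₁) (Fin n₂) ℝ, X.rank ≤ r → Y.rank ≤ r →
      |(inner ℝ (𝒜 X) (𝒜 Y) : ℝ) - mip X Y| ≤ δ * frobNorm X * frobNorm Y :=
  rip_inner_product_preservation_general n₁ n₂ m r 𝒜 δ hRIP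
end

section
/- Let A₁, …, A_m ∈ ℝ^{n₁×n₂} and define 𝒜(X) = (m^{−1/2}·⟨Aᵢ, X⟩)_{1≤i≤m}. Suppose M⋆ ∈ ℝ^{n₁×n₂} has rank at most r and 𝒜 satisfies the 2r-RIP with RIP constant δ_{2r} < 1. Then the surrogate matrix Y = (1/m)·Σᵢ ⟨Aᵢ, M⋆⟩·Aᵢ satisfies ‖Y − M⋆‖ ≤ δ_{2r}·‖M⋆‖_F ≤ δ_{2r}·√r·‖M⋆‖, where ‖·‖ denotes the spectral norm. -/
/-!
Write `B = Y - M⋆`. Polarizing the RIP at `M⋆ + X` and `M⋆ - X` gives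
`2⟨X, B⟩ ≤ δ (‖M⋆‖_F² + ‖X‖_F²)` whenever `rank X ≤ r`; applied to a rescaled `X` with
`‖X‖_F = ‖M⋆‖_F` this becomes `⟨X, B⟩ ≤ δ ‖M⋆‖_F ‖X‖_F`. Testing `B` against the rank-one matrices
`w vᵀ` with unit `w, v` bounds its spectral norm. For the second inequality,
`‖M‖_F² = tr (MᵀM)` is the sum of the eigenvalues of `MᵀM`: exactly `rank M` of them are nonzero and
each is at most `‖MᵀM‖ = ‖M‖²`.
-/

open Matrix

/-- The spectral norm (largest singular value) of a real matrix, i.e. the operator norm of the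
induced map between Euclidean spaces. -/
noncomputable def specNorm {p q : ℕ} (M : Matrix (Fin p) (Fin q) ℝ) : ℝ :=
  ‖LinearMap.toContinuousLinearMap (Matrix.toEuclideanLin M)‖

open scoped Matrix.Norms.L2Operator

theorem Matrix.rank_add_smul_le {m n K : Type*} [Fintype n] [Field K] (A B : Matrix m n K)
    (c : K) : (A + c • B).rank ≤ A.rank + B.rank := by
  refine (Submodule.finrank_mono ?_).trans (Submodule.finrank_add_le_finrank_add_finrank _ _)
  rintro _ ⟨v, rfl⟩
  refine Submodule.mem_sup.2 ⟨A *ᵥ v, ⟨v, rfl⟩, B *ᵥ (c • v), ⟨c • v, rfl⟩, ?_⟩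
  simp [Matrix.mulVec_smul]

theorem Matrix.rank_pos_of_ne_zero {m n K : Type*} [Fintype n] [DecidableEq n] [Field K]
    {M : Matrix m n K} (h : M ≠ 0) : 0 < M.rank := by
  refine Nat.pos_of_ne_zero fun h0 => h ?_
  rwa [Matrix.rank, Submodule.finrank_eq_zero, LinearMap.range_eq_bot, ← Matrix.toLin'_apply',
    LinearEquiv.map_eq_zero_iff] at h0

section FrobeniusInner

variable {p q : ℕ}

theorem mip_eq_sum (A B : Matrix (Fin p) (Fin q) ℝ) : mip A B = ∑ i, ∑ j, A i j * B i j := by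
  simp only [mip, trace, diag, mul_apply, transpose_apply]
  exact Finset.sum_comm

theorem mip_comm (A B : Matrix (Fin p) (Fin q) ℝ) : mip A B = mip B A := by
  simp only [mip_eq_sum, mul_comm]

@[simp] theorem mip_zero_left (B : Matrix (Fin p) (Fin q) ℝ) : mip 0 B = 0 := by simp [mip]

@[simp] theorem mip_zero_right (A : Matrix (Fin p) (Fin q) ℝ) : mip A 0 = 0 := by simp [mip]

theorem mip_add_right (A B C : Matrix (Fin p) (Fin q) ℝ) : mip A (B + C) = mip A B + mip A C := by
  simp [mip, Matrix.mul_add]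

theorem mip_sub_right (A B C : Matrix (Fin p) (Fin q) ℝ) : mip A (B - C) = mip A B - mip A C := by
  simp [mip, Matrix.mul_sub]

theorem mip_smul_right (c : ℝ) (A B : Matrix (Fin p) (Fin q) ℝ) : mip A (c • B) = c * mip A B := by
  simp [mip]

theorem mip_smul_left (c : ℝ) (A B : Matrix (Fin p) (Fin q) ℝ) : mip (c • A) B = c * mip A B := by
  rw [mip_comm, mip_smul_right, mip_comm]

theorem mip_sum_right {ι : Type*} (s : Finset ι) (A : Matrix (Fin p) (Fin q) ℝ)
    (f : ι → Matrix (Fin p) (Fin q) ℝ) : mip A (∑ k ∈ s, f k) = ∑ k ∈ s, mip A (f k) := by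
  simp [mip, Matrix.mul_sum, Matrix.trace_sum]

@[simp] theorem frobNorm_zero : frobNorm (0 : Matrix (Fin p) (Fin q) ℝ) = 0 := by simp [frobNorm]

theorem frobNorm_nonneg (A : Matrix (Fin p) (Fin q) ℝ) : 0 ≤ frobNorm A := Real.sqrt_nonneg _

theorem frobNorm_sq (A : Matrix (Fin p) (Fin q) ℝ) : frobNorm A ^ 2 = mip A A := by
  rw [frobNorm, Real.sq_sqrt (by positivity), mip_eq_sum]
  simp only [sq]

theorem frobNorm_pos {A : Matrix (Fin p) (Fin q) ℝ} (hA : A ≠ 0) : 0 < frobNorm A := by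
  refine Real.sqrt_pos.2 ((Finset.sum_pos_iff_of_nonneg fun i _ => by positivity).2 ?_)
  obtain ⟨i, j, hij⟩ : ∃ i j, A i j ≠ 0 := by simpa [← Matrix.ext_iff] using hA
  exact ⟨i, Finset.mem_univ _, Finset.sum_pos' (fun j _ => by positivity)
    ⟨j, Finset.mem_univ _, by positivity⟩⟩

theorem frobNorm_add_sq (A B : Matrix (Fin p) (Fin q) ℝ) :
    frobNorm (A + B) ^ 2 = frobNorm A ^ 2 + 2 * mip A B + frobNorm B ^ 2 := by
  simp only [frobNorm_sq, mip_eq_sum, Matrix.add_apply, ← Finset.sum_add_distrib, Finset.mul_sum]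
  exact Finset.sum_congr rfl fun i _ => Finset.sum_congr rfl fun j _ => by ring

theorem frobNorm_sub_sq (A B : Matrix (Fin p) (Fin q) ℝ) :
    frobNorm (A - B) ^ 2 = frobNorm A ^ 2 - 2 * mip A B + frobNorm B ^ 2 := by
  simp only [frobNorm_sq, mip_eq_sum, Matrix.sub_apply, ← Finset.sum_add_distrib,
    ← Finset.sum_sub_distrib, Finset.mul_sum]
  exact Finset.sum_congr rfl fun i _ => Finset.sum_congr rfl fun j _ => by ring

theorem frobNorm_smul_sq (c : ℝ) (A : Matrix (Fin p) (Fin q) ℝ) :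
    frobNorm (c • A) ^ 2 = c ^ 2 * frobNorm A ^ 2 := by
  rw [frobNorm_sq, frobNorm_sq, mip_smul_left, mip_smul_right]; ring

theorem frobNorm_sq_eq_trace (A : Matrix (Fin p) (Fin q) ℝ) :
    frobNorm A ^ 2 = (Aᴴ * A).trace := by
  rw [frobNorm_sq, mip, conjTranspose_eq_transpose_of_trivial]

theorem mip_vecMulVec (w : Fin p → ℝ) (v : Fin q → ℝ) (B : Matrix (Fin p) (Fin q) ℝ) :
    mip (vecMulVec w v) B = w ⬝ᵥ B *ᵥ v := by
  simp only [mip_eq_sum, vecMulVec_apply, mulVec, dotProduct, Finset.mul_sum]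
  exact Finset.sum_congr rfl fun i _ => Finset.sum_congr rfl fun j _ => by ring

theorem frobNorm_vecMulVec (x : EuclideanSpace ℝ (Fin p)) (y : EuclideanSpace ℝ (Fin q)) :
    frobNorm (vecMulVec x y) = ‖x‖ * ‖y‖ := by
  simp only [frobNorm, EuclideanSpace.norm_eq, Real.norm_eq_abs, sq_abs, vecMulVec_apply,
    mul_pow, ← Finset.mul_sum, ← Finset.sum_mul]
  exact Real.sqrt_mul (by positivity) _

end FrobeniusInner

theorem Matrix.IsHermitian.eigenvalues_le_l2_opNorm {n : Type*} [Fintype n] [DecidableEq n]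
    {G : Matrix n n ℝ} (hG : G.IsHermitian) (i : n) : hG.eigenvalues i ≤ ‖G‖ :=
  -- `NormOneClass` for the operator norm needs a nontrivial matrix ring
  have : Nonempty n := ⟨i⟩
  (le_abs_self _).trans (spectrum.norm_le_norm_of_mem (hG.eigenvalues_mem_spectrum_real i))

theorem Matrix.PosSemidef.trace_le_rank_mul_l2_opNorm {n : Type*} [Fintype n] [DecidableEq n]
    {G : Matrix n n ℝ} (hG : G.PosSemidef) : G.trace ≤ G.rank * ‖G‖ := by
  classical
  rw [hG.isHermitian.trace_eq_sum_eigenvalues, hG.isHermitian.rank_eq_card_non_zero_eigs,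
    Fintype.card_subtype, ← Finset.sum_filter_ne_zero, ← nsmul_eq_mul, ← Finset.sum_const]
  exact Finset.sum_le_sum fun i _ => hG.isHermitian.eigenvalues_le_l2_opNorm i

section SpectralNorm

variable {p q : ℕ}

theorem specNorm_eq_l2_opNorm (A : Matrix (Fin p) (Fin q) ℝ) : specNorm A = ‖A‖ := rfl

theorem specNorm_nonneg (A : Matrix (Fin p) (Fin q) ℝ) : 0 ≤ specNorm A := norm_nonneg _

theorem frobNorm_le_sqrt_rank_mul_specNorm (A : Matrix (Fin p) (Fin q) ℝ) :
    frobNorm A ≤ Real.sqrt A.rank * specNorm A := by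
  have h := (posSemidef_conjTranspose_mul_self A).trace_le_rank_mul_l2_opNorm
  rw [rank_conjTranspose_mul_self, l2_opNorm_conjTranspose_mul_self, ← frobNorm_sq_eq_trace,
    ← specNorm_eq_l2_opNorm, ← sq] at h
  calc frobNorm A = √(frobNorm A ^ 2) := (Real.sqrt_sq (frobNorm_nonneg A)).symm
    _ ≤ √(A.rank * specNorm A ^ 2) := Real.sqrt_le_sqrt h
    _ = √A.rank * specNorm A := by
      rw [Real.sqrt_mul (Nat.cast_nonneg _), Real.sqrt_sq (specNorm_nonneg A)]

theorem specNorm_le_of_mip_le {B : Matrix (Fin p) (Fin q) ℝ} {c : ℝ} (hc : 0 ≤ c)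
    (h : ∀ X : Matrix (Fin p) (Fin q) ℝ, X.rank ≤ 1 → mip X B ≤ c * frobNorm X) :
    specNorm B ≤ c := by
  refine ContinuousLinearMap.opNorm_le_of_re_inner_le hc fun x y hx hy => ?_
  have := h (vecMulVec y x) (rank_vecMulVec_le _ _)
  rw [frobNorm_vecMulVec, hx, hy, mul_one, mul_one, mip_vecMulVec] at this
  simpa [EuclideanSpace.inner_eq_star_dotProduct] using this

end SpectralNorm

section Sensing

variable {p q m : ℕ} (A : Fin m → Matrix (Fin p) (Fin q) ℝ)

/-- `‖𝒜 X‖₂²` for the sensing operator `𝒜 X = (m^{-1/2} ⟨Aᵢ, X⟩)ᵢ`. -/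
noncomputable def sensingEnergy (X : Matrix (Fin p) (Fin q) ℝ) : ℝ :=
  (1 / (m : ℝ)) * ∑ i, mip (A i) X ^ 2

noncomputable def surrogate (M : Matrix (Fin p) (Fin q) ℝ) : Matrix (Fin p) (Fin q) ℝ :=
  (1 / (m : ℝ)) • ∑ i, mip (A i) M • A i

def SatisfiesRIP (k : ℕ) (δ : ℝ) : Prop :=
  ∀ X : Matrix (Fin p) (Fin q) ℝ, X.rank ≤ k →
    (1 - δ) * frobNorm X ^ 2 ≤ sensingEnergy A X ∧ sensingEnergy A X ≤ (1 + δ) * frobNorm X ^ 2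

@[simp] theorem surrogate_zero : surrogate A 0 = 0 := by simp [surrogate]

theorem four_mul_mip_surrogate (M X : Matrix (Fin p) (Fin q) ℝ) :
    4 * mip X (surrogate A M) = sensingEnergy A (M + X) - sensingEnergy A (M - X) := by
  simp only [surrogate, sensingEnergy, mip_smul_right, mip_sum_right, mip_add_right,
    mip_sub_right, mip_comm X (A _), ← mul_sub, ← Finset.sum_sub_distrib, Finset.mul_sum]
  exact Finset.sum_congr rfl fun i _ => by ring

theorem two_mul_mip_surrogate_sub_le {δ : ℝ} {M X : Matrix (Fin p) (Fin q) ℝ}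
    (hadd : sensingEnergy A (M + X) ≤ (1 + δ) * frobNorm (M + X) ^ 2)
    (hsub : (1 - δ) * frobNorm (M - X) ^ 2 ≤ sensingEnergy A (M - X)) :
    2 * mip X (surrogate A M - M) ≤ δ * (frobNorm M ^ 2 + frobNorm X ^ 2) := by
  rw [frobNorm_add_sq] at hadd
  rw [frobNorm_sub_sq] at hsub
  rw [mip_sub_right, mip_comm X M]
  linear_combination (four_mul_mip_surrogate A M X + hadd + hsub) / 2

theorem mip_surrogate_sub_le {r : ℕ} {δ : ℝ} (hA : SatisfiesRIP A (2 * r) δ)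
    {M X : Matrix (Fin p) (Fin q) ℝ} (hM : M.rank ≤ r) (hX : X.rank ≤ r) :
    mip X (surrogate A M - M) ≤ δ * frobNorm M * frobNorm X := by
  rcases eq_or_ne M 0 with rfl | hM0
  · simp
  rcases eq_or_ne X 0 with rfl | hX0
  · simp
  have hrank (s : ℝ) : (M + s • X).rank ≤ 2 * r := (rank_add_smul_le M X s).trans (by omega)
  obtain ⟨t, ht_pos, ht⟩ : ∃ t > 0, t * frobNorm X = frobNorm M :=
    ⟨_, div_pos (frobNorm_pos hM0) (frobNorm_pos hX0), div_mul_cancel₀ _ (frobNorm_pos hX0).ne'⟩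
  have key := two_mul_mip_surrogate_sub_le A (hA _ (hrank t)).2
    (hA (M - t • X) (by simpa [sub_eq_add_neg] using hrank (-t))).1
  rw [mip_smul_left, frobNorm_smul_sq] at key
  refine le_of_mul_le_mul_left ?_ ht_pos
  linear_combination key / 2 + δ / 2 * (t * frobNorm X - frobNorm M) * ht

theorem specNorm_surrogate_sub_le {r : ℕ} {δ : ℝ} (hA : SatisfiesRIP A (2 * r) δ) (hδ : 0 ≤ δ)
    {M : Matrix (Fin p) (Fin q) ℝ} (hM : M.rank ≤ r) :
    specNorm (surrogate A M - M) ≤ δ * frobNorm M := by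
  rcases eq_or_ne M 0 with rfl | hM0
  · simp [specNorm_eq_l2_opNorm]
  refine specNorm_le_of_mip_le (by have := frobNorm_nonneg M; positivity) fun X hX => ?_
  exact mip_surrogate_sub_le A hA hM (hX.trans ((rank_pos_of_ne_zero hM0).trans_le hM))

end Sensing

theorem spectral_surrogate_matrix_sensing_accuracy_general
    (n₁ n₂ m r : ℕ)
    (A : Fin m → Matrix (Fin n₁) (Fin n₂) ℝ)
    (δ : ℝ) (hδ0 : 0 ≤ δ)
    (hRIP : ∀ X : Matrix (Fin n₁) (Fin n₂) ℝ, X.rank ≤ 2 * r →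
      (1 - δ) * frobNorm X ^ 2 ≤ (1 / (m : ℝ)) * ∑ i, (mip (A i) X) ^ 2 ∧
      (1 / (m : ℝ)) * ∑ i, (mip (A i) X) ^ 2 ≤ (1 + δ) * frobNorm X ^ 2)
    (Mstar : Matrix (Fin n₁) (Fin n₂) ℝ) (hrank : Mstar.rank ≤ r) :
    specNorm ((1 / (m : ℝ)) • ∑ i, mip (A i) Mstar • A i - Mstar) ≤ δ * frobNorm Mstar
    ∧ δ * frobNorm Mstar ≤ δ * Real.sqrt r * specNorm Mstar := by
  refine ⟨specNorm_surrogate_sub_le A hRIP hδ0 hrank, ?_⟩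
  have hr : Real.sqrt Mstar.rank ≤ Real.sqrt r := Real.sqrt_le_sqrt (by exact_mod_cast hrank)
  calc δ * frobNorm Mstar ≤ δ * (Real.sqrt Mstar.rank * specNorm Mstar) :=
        mul_le_mul_of_nonneg_left (frobNorm_le_sqrt_rank_mul_specNorm Mstar) hδ0
    _ ≤ δ * Real.sqrt r * specNorm Mstar := by
        rw [← mul_assoc]; gcongr; exact specNorm_nonneg Mstar

/-- **Accuracy of the spectral-method surrogate matrix in matrix sensing.**
Let `𝒜(X) = (m^{-1/2}⟨Aᵢ, X⟩)ᵢ` satisfy the `2r`-RIP with constant `δ_{2r} < 1`, and let `M⋆`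
have rank at most `r`. Then `Y = (1/m) ∑ᵢ ⟨Aᵢ, M⋆⟩ Aᵢ` satisfies
`‖Y − M⋆‖ ≤ δ_{2r}‖M⋆‖_F ≤ δ_{2r}√r‖M⋆‖`. -/
theorem spectral_surrogate_matrix_sensing_accuracy
    (n₁ n₂ m r : ℕ)
    (A : Fin m → Matrix (Fin n₁) (Fin n₂) ℝ)
    (δ : ℝ) (hδ0 : 0 ≤ δ) (hδ : δ < 1)
    (hRIP : ∀ X : Matrix (Fin n₁) (Fin n₂) ℝ, X.rank ≤ 2 * r →
      (1 - δ) * frobNorm X ^ 2 ≤ (1 / (m : ℝ)) * ∑ i, (mip (A i) X) ^ 2 ∧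
      (1 / (m : ℝ)) * ∑ i, (mip (A i) X) ^ 2 ≤ (1 + δ) * frobNorm X ^ 2)
    (Mstar : Matrix (Fin n₁) (Fin n₂) ℝ) (hrank : Mstar.rank ≤ r) :
    specNorm ((1 / (m : ℝ)) • ∑ i, mip (A i) Mstar • A i - Mstar) ≤ δ * frobNorm Mstar
    ∧ δ * frobNorm Mstar ≤ δ * Real.sqrt r * specNorm Mstar :=
  spectral_surrogate_matrix_sensing_accuracy_general n₁ n₂ m r A δ hδ0 hRIP Mstar hrank
end

section
/- Let f : ℝⁿˣʳ → ℝ be twice continuously differentiable with global minimizer X⋆, and let ζ, α, β > 0. Suppose: (a) ‖∇²f(X)‖ ≤ β (as an operator on ℝ^{nr}) for all X in B_ζ(X⋆) = {X : ‖X − X⋆‖_F ≤ ζ}; (b) ∇f(XH) = ∇f(X)·H for every X and every orthonormal H ∈ O^{r×r}; and (c) for every X ∈ B_ζ(X⋆), every Z ∈ ℝⁿˣʳ, and every H_Z minimizing H ↦ ‖ZH − X⋆‖_F over O^{r×r}, vec(Z·H_Z − X⋆)ᵀ · ∇²f(X) · vec(Z·H_Z − X⋆) ≥ α·‖Z·H_Z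 − X⋆‖_F². Then the gradient descent iterates X_{t+1} = X_t − (1/β)·∇f(X_t) started from any X₀ ∈ B_ζ(X⋆) satisfy dist²(X_t, X⋆) ≤ (1 − α/β)ᵗ · dist²(X₀, X⋆) for all t ≥ 0. -/
/-! Align each iterate with `X⋆` by a Procrustes rotation, which exists because the orthogonal
matrices form a compact set. Rotation equivariance of `∇f` makes the gradient step commute with
this alignment, so it suffices to follow one step from an aligned point `Y` with `d = ‖Y − X⋆‖`.
Taylor's formula with the curvature condition on `[X⋆, Y]` gives
`f(Y) − f(X⋆) + (α/2) d² ≤ ⟨∇f(Y), Y − X⋆⟩`, while the smoothness bound and the global minimality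
of `X⋆` give `w ‖∇f(Y)‖² − (β/2) w² ‖∇f(Y)‖² ≤ f(Y) − f(X⋆)` for every step `w` short enough to
keep `Y − w ∇f(Y)` in the ball. Together they give `α d² + ‖∇f(Y)‖²/β ≤ 2 ⟨∇f(Y), Y − X⋆⟩`, which
is `‖Y − X⋆ − ∇f(Y)/β‖² ≤ (1 − α/β) d²`. In particular the distance never increases, so every
iterate stays in the ball. -/

open Matrix

attribute [local instance] Matrix.frobeniusNormedAddCommGroup Matrix.frobeniusNormedSpace

/-- The gradient of `f : ℝ^{n×r} → ℝ` as a matrix: `(∇f(X))_{ij} = Df(X)[E_{ij}]`. -/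
noncomputable def gradM {n r : ℕ} (f : Matrix (Fin n) (Fin r) ℝ → ℝ)
    (X : Matrix (Fin n) (Fin r) ℝ) : Matrix (Fin n) (Fin r) ℝ :=
  Matrix.of fun i j => fderiv ℝ f X (Matrix.single i j 1)

/-- `dist(X, X⋆) = min_{H ∈ O^{r×r}} ‖XH − X⋆‖_F` (here `‖·‖` is the Frobenius norm). -/
noncomputable def distF {n r : ℕ} (U X : Matrix (Fin n) (Fin r) ℝ) : ℝ :=
  sInf ((fun H => ‖U * H - X‖) '' {H : Matrix (Fin r) (Fin r) ℝ | Hᵀ * H = 1})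

open Set

theorem le_add_deriv_add_half_of_deriv2_le {ψ ψ' ψ'' : ℝ → ℝ} {C : ℝ}
    (hψ : ∀ s, HasDerivAt ψ (ψ' s) s) (hψ' : ∀ s, HasDerivAt ψ' (ψ'' s) s)
    (hC : ∀ s ∈ Icc (0 : ℝ) 1, ψ'' s ≤ C) :
    ψ 1 ≤ ψ 0 + ψ' 0 + C / 2 := by
  have hψ'_le : ∀ s ∈ Icc (0 : ℝ) 1, ψ' s ≤ ψ' 0 + C * s := by
    refine image_le_of_deriv_right_le_deriv_boundary (B' := fun _ => C)
      (fun s _ => (hψ' s).continuousAt.continuousWithinAt) (fun s _ => (hψ' s).hasDerivWithinAt)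
      (by simp) (by fun_prop) (fun s _ => ?_) (fun s hs => hC s (Ico_subset_Icc_self hs))
    simpa using (((hasDerivAt_id s).const_mul C).const_add (ψ' 0)).hasDerivWithinAt
  have key := image_le_of_deriv_right_le_deriv_boundary
    (B := fun s => ψ 0 + ψ' 0 * s + C * s ^ 2 / 2) (B' := fun s => ψ' 0 + C * s)
    (fun s _ => (hψ s).continuousAt.continuousWithinAt) (fun s _ => (hψ s).hasDerivWithinAt)
    (by simp) (by fun_prop) (fun s _ => ?_) (fun s hs => hψ'_le s (Ico_subset_Icc_self hs))
    (right_mem_Icc.2 zero_le_one)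
  · simpa using key
  · refine HasDerivAt.hasDerivWithinAt ?_
    convert (((hasDerivAt_id s).const_mul (ψ' 0)).const_add (ψ 0)).add
      (((hasDerivAt_pow 2 s).const_mul C).div_const 2) using 1
    · ext; simp
    · simp; ring

theorem add_deriv_add_half_le_of_le_deriv2 {ψ ψ' ψ'' : ℝ → ℝ} {C : ℝ}
    (hψ : ∀ s, HasDerivAt ψ (ψ' s) s) (hψ' : ∀ s, HasDerivAt ψ' (ψ'' s) s)
    (hC : ∀ s ∈ Icc (0 : ℝ) 1, C ≤ ψ'' s) :
    ψ 0 + ψ' 0 + C / 2 ≤ ψ 1 := by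
  have := le_add_deriv_add_half_of_deriv2_le (fun s => (hψ s).neg) (fun s => (hψ' s).neg)
    (C := -C) fun s hs => neg_le_neg (hC s hs)
  simp only [Pi.neg_apply] at this
  linarith

section Taylor

variable {E : Type*} [NormedAddCommGroup E] [NormedSpace ℝ E] {f : E → ℝ}

theorem ContDiff.hasDerivAt_comp_add_smul (hf : ContDiff ℝ 2 f) (x v : E) (s : ℝ) :
    HasDerivAt (fun s : ℝ => f (x + s • v)) (fderiv ℝ f (x + s • v) v) s := by
  have hline : HasDerivAt (fun s : ℝ => x + s • v) v s := by
    simpa using ((hasDerivAt_id s).smul_const v).const_add x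
  exact ((hf.differentiable (by norm_num)) _).hasFDerivAt.comp_hasDerivAt s hline

theorem ContDiff.hasDerivAt_fderiv_comp_add_smul (hf : ContDiff ℝ 2 f) (x v : E) (s : ℝ) :
    HasDerivAt (fun s : ℝ => fderiv ℝ f (x + s • v) v)
      (iteratedFDeriv ℝ 2 f (x + s • v) ![v, v]) s := by
  have hline : HasDerivAt (fun s : ℝ => x + s • v) v s := by
    simpa using ((hasDerivAt_id s).smul_const v).const_add x
  have hf' : Differentiable ℝ (fderiv ℝ f) :=
    (hf.fderiv_right (m := 1) (by norm_num)).differentiable (by norm_num)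
  rw [iteratedFDeriv_two_apply]
  exact ((ContinuousLinearMap.apply ℝ ℝ v).hasFDerivAt.comp _
    (hf' _).hasFDerivAt).comp_hasDerivAt s hline

theorem ContDiff.le_add_fderiv_add_half (hf : ContDiff ℝ 2 f) {x v : E} {C : ℝ}
    (hC : ∀ s ∈ Icc (0 : ℝ) 1, iteratedFDeriv ℝ 2 f (x + s • v) ![v, v] ≤ C) :
    f (x + v) ≤ f x + fderiv ℝ f x v + C / 2 := by
  simpa using le_add_deriv_add_half_of_deriv2_le (hf.hasDerivAt_comp_add_smul x v)
    (hf.hasDerivAt_fderiv_comp_add_smul x v) hC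

theorem ContDiff.add_fderiv_add_half_le (hf : ContDiff ℝ 2 f) {x v : E} {C : ℝ}
    (hC : ∀ s ∈ Icc (0 : ℝ) 1, C ≤ iteratedFDeriv ℝ 2 f (x + s • v) ![v, v]) :
    f x + fderiv ℝ f x v + C / 2 ≤ f (x + v) := by
  simpa using add_deriv_add_half_le_of_le_deriv2 (hf.hasDerivAt_comp_add_smul x v)
    (hf.hasDerivAt_fderiv_comp_add_smul x v) hC

theorem ContinuousMultilinearMap.apply_same_le_opNorm_mul_sq
    (M : ContinuousMultilinearMap ℝ (fun _ : Fin 2 => E) ℝ) (v : E) :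
    M ![v, v] ≤ ‖M‖ * ‖v‖ ^ 2 := by
  have := M.le_opNorm ![v, v]
  rw [Fin.prod_univ_two] at this
  simp only [Matrix.cons_val_zero, Matrix.cons_val_one] at this
  nlinarith [le_abs_self (M ![v, v]), Real.norm_eq_abs (M ![v, v])]

theorem iteratedFDeriv_two_apply_neg (x v : E) :
    iteratedFDeriv ℝ 2 f x ![-v, -v] = iteratedFDeriv ℝ 2 f x ![v, v] := by
  simp [iteratedFDeriv_two_apply]

theorem ContDiff.sub_add_half_mul_sq_le_fderiv (hf : ContDiff ℝ 2 f) {S : Set E}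
    (hS : Convex ℝ S) {x y : E} (hx : x ∈ S) (hy : y ∈ S) {α : ℝ}
    (hα : ∀ z ∈ S, α * ‖y - x‖ ^ 2 ≤ iteratedFDeriv ℝ 2 f z ![y - x, y - x]) :
    f y - f x + α / 2 * ‖y - x‖ ^ 2 ≤ fderiv ℝ f y (y - x) := by
  have hx_eq : x - y = -(y - x) := (neg_sub y x).symm
  have := hf.add_fderiv_add_half_le (x := y) (v := x - y) (C := α * ‖y - x‖ ^ 2) fun s hs => by
    rw [hx_eq, iteratedFDeriv_two_apply_neg, ← hx_eq]
    exact hα _ (hS.add_smul_sub_mem hy hx hs)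
  rw [add_sub_cancel, hx_eq, map_neg] at this
  linarith

theorem ContDiff.le_sub_fderiv_add_half_mul_sq (hf : ContDiff ℝ 2 f) {S : Set E}
    (hS : Convex ℝ S) {y v : E} (hy : y ∈ S) (hyv : y - v ∈ S) {β : ℝ}
    (hβ : ∀ z ∈ S, ‖iteratedFDeriv ℝ 2 f z‖ ≤ β) :
    f (y - v) ≤ f y - fderiv ℝ f y v + β / 2 * ‖v‖ ^ 2 := by
  have := hf.le_add_fderiv_add_half (x := y) (v := -v) (C := β * ‖v‖ ^ 2) fun s hs => by
    have hz : y + s • -v ∈ S := by simpa using hS.add_smul_sub_mem hy hyv hs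
    rw [iteratedFDeriv_two_apply_neg]
    exact ((iteratedFDeriv ℝ 2 f _).apply_same_le_opNorm_mul_sq v).trans
      (mul_le_mul_of_nonneg_right (hβ _ hz) (sq_nonneg _))
  rw [← sub_eq_add_neg, map_neg] at this
  linarith

end Taylor

-- Read `d = ‖Y - X⋆‖²`, `g = ‖∇f(Y)‖²`, `p = ⟪∇f(Y), Y - X⋆⟫` and `a = f(Y) - f(X⋆)`.
theorem mul_add_div_le_two_mul_of_descent {α β d g p a : ℝ} (hα : 0 < α) (hβ : 0 < β)
    (hd : 0 ≤ d) (hdg : d = 0 → g = 0) (ha : 0 ≤ a) (hlow : a + α / 2 * d ≤ p)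
    (hdesc : ∀ w, 0 ≤ w → w * g ≤ 2 * p → w * g - β / 2 * (w ^ 2 * g) ≤ a) :
    α * d + g / β ≤ 2 * p := by
  have hαd : 0 ≤ α * d := mul_nonneg hα.le hd
  have hp : 0 ≤ p := by linarith
  -- Otherwise the admissible step `2p/g` would descend by more than `p ≥ a`.
  have hadm : g / β ≤ 2 * p := by
    by_contra! hlt
    rcases hp.eq_or_lt with rfl | hp
    · have hd0 : d = 0 := by nlinarith
      simp [hdg hd0] at hlt
    · have hg : 0 < g := (div_pos_iff_of_pos_right hβ).1 (by linarith)
      have h := hdesc (2 * p / g) (by positivity) (by rw [div_mul_cancel₀ _ hg.ne'])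
      have e : 2 * p / g * g - β / 2 * ((2 * p / g) ^ 2 * g) = 2 * p - 2 * β * p ^ 2 / g := by
        field_simp
      have hpg : p * g ≤ 2 * β * p ^ 2 := by
        rw [← le_div_iff₀ hg]
        linarith
      rw [lt_div_iff₀ hβ] at hlt
      nlinarith
  have h := hdesc (1 / β) (by positivity) (by rwa [one_div_mul_eq_div])
  have e : 1 / β * g - β / 2 * ((1 / β) ^ 2 * g) = g / β / 2 := by field_simp; ring
  linarith

namespace Matrix

variable {m k : Type*} [Fintype m] [Fintype k]

theorem frobenius_norm_sq_eq_sum (A : Matrix m k ℝ) : ‖A‖ ^ 2 = ∑ i, ∑ j, A i j ^ 2 := by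
  rw [frobenius_norm_def, ← Real.rpow_natCast, ← Real.rpow_mul (by positivity)]
  norm_num

theorem frobenius_norm_sub_smul_sq (A B : Matrix m k ℝ) (c : ℝ) :
    ‖A - c • B‖ ^ 2 = ‖A‖ ^ 2 - 2 * c * ∑ i, ∑ j, A i j * B i j + c ^ 2 * ‖B‖ ^ 2 := by
  simp only [frobenius_norm_sq_eq_sum, Finset.mul_sum, ← Finset.sum_sub_distrib,
    ← Finset.sum_add_distrib, Matrix.sub_apply, Matrix.smul_apply, smul_eq_mul]
  exact Finset.sum_congr rfl fun i _ => Finset.sum_congr rfl fun j _ => by ring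

theorem frobenius_norm_sq_eq_trace (A : Matrix m k ℝ) : ‖A‖ ^ 2 = trace (Aᵀ * A) := by
  rw [frobenius_norm_sq_eq_sum, trace, Finset.sum_comm]
  simp [mul_apply, sq]

theorem frobenius_norm_mul_of_transpose_mul_self_eq_one [DecidableEq k] (A : Matrix m k ℝ)
    {H : Matrix k k ℝ} (hH : Hᵀ * H = 1) : ‖A * H‖ = ‖A‖ := by
  have hH' : H * Hᵀ = 1 := mul_eq_one_comm.1 hH
  refine (pow_left_inj₀ (norm_nonneg _) (norm_nonneg _) two_ne_zero).1 ?_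
  rw [frobenius_norm_sq_eq_trace, frobenius_norm_sq_eq_trace, transpose_mul, Matrix.mul_assoc,
    trace_mul_comm, Matrix.mul_assoc, Matrix.mul_assoc, hH', Matrix.mul_one]

theorem isCompact_setOf_transpose_mul_self_eq_one [DecidableEq k] :
    IsCompact {H : Matrix k k ℝ | Hᵀ * H = 1} := by
  refine Metric.isCompact_of_isClosed_isBounded
    (isClosed_eq (by fun_prop) continuous_const) ((Metric.isBounded_closedBall (x := 0)
      (r := ‖(1 : Matrix k k ℝ)‖)).subset fun H hH => ?_)
  simp [← frobenius_norm_mul_of_transpose_mul_self_eq_one 1 hH]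

end Matrix

section GradientAndAlignment

variable {n r : ℕ}

theorem fderiv_apply_eq_sum_mul_gradM (f : Matrix (Fin n) (Fin r) ℝ → ℝ)
    (Y W : Matrix (Fin n) (Fin r) ℝ) :
    fderiv ℝ f Y W = ∑ i, ∑ j, W i j * gradM f Y i j := by
  conv_lhs => rw [matrix_eq_sum_single W]
  simp only [map_sum, gradM, of_apply]
  refine Finset.sum_congr rfl fun i _ => Finset.sum_congr rfl fun j _ => ?_
  rw [← smul_eq_mul, ← map_smul, smul_single, smul_eq_mul, mul_one]

theorem fderiv_apply_gradM_self (f : Matrix (Fin n) (Fin r) ℝ → ℝ)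
    (Y : Matrix (Fin n) (Fin r) ℝ) :
    fderiv ℝ f Y (gradM f Y) = ‖gradM f Y‖ ^ 2 := by
  rw [fderiv_apply_eq_sum_mul_gradM, frobenius_norm_sq_eq_sum]
  simp only [sq]

theorem norm_sub_smul_gradM_sq (f : Matrix (Fin n) (Fin r) ℝ → ℝ) (Y A : Matrix (Fin n) (Fin r) ℝ)
    (c : ℝ) :
    ‖A - c • gradM f Y‖ ^ 2 = ‖A‖ ^ 2 - 2 * c * fderiv ℝ f Y A + c ^ 2 * ‖gradM f Y‖ ^ 2 := by
  rw [frobenius_norm_sub_smul_sq, fderiv_apply_eq_sum_mul_gradM]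

theorem IsLocalMin.gradM_eq_zero {f : Matrix (Fin n) (Fin r) ℝ → ℝ} {X : Matrix (Fin n) (Fin r) ℝ}
    (h : IsLocalMin f X) : gradM f X = 0 := by
  ext i j
  exact DFunLike.congr_fun h.fderiv_eq_zero _

theorem distF_nonneg (U X : Matrix (Fin n) (Fin r) ℝ) : 0 ≤ distF U X :=
  Real.sInf_nonneg fun _ ⟨_, _, h⟩ => h ▸ norm_nonneg _

theorem distF_le (U X : Matrix (Fin n) (Fin r) ℝ) {H : Matrix (Fin r) (Fin r) ℝ}
    (hH : Hᵀ * H = 1) : distF U X ≤ ‖U * H - X‖ :=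
  csInf_le ⟨0, fun _ ⟨_, _, h⟩ => h ▸ norm_nonneg _⟩ (mem_image_of_mem _ hH)

theorem exists_distF_eq (U X : Matrix (Fin n) (Fin r) ℝ) :
    ∃ H : Matrix (Fin r) (Fin r) ℝ, Hᵀ * H = 1 ∧
      (∀ H' : Matrix (Fin r) (Fin r) ℝ, H'ᵀ * H' = 1 → ‖U * H - X‖ ≤ ‖U * H' - X‖) ∧
      distF U X = ‖U * H - X‖ := by
  obtain ⟨H, hH, hmin⟩ := isCompact_setOf_transpose_mul_self_eq_one.exists_isMinOn
    ⟨1, by simp⟩ (f := fun H => ‖U * H - X‖) (by fun_prop)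
  exact ⟨H, hH, fun H' hH' => hmin hH',
    IsLeast.csInf_eq ⟨mem_image_of_mem _ hH, fun _ ⟨H', hH', h⟩ => h ▸ hmin hH'⟩⟩

end GradientAndAlignment

section GradientDescent

variable {n r : ℕ} {f : Matrix (Fin n) (Fin r) ℝ → ℝ} {Xstar : Matrix (Fin n) (Fin r) ℝ}
  {α β ζ : ℝ}

theorem norm_sub_inv_smul_gradM_sq_le (hα : 0 < α) (hβ : 0 < β) (hf : ContDiff ℝ 2 f)
    (hmin : ∀ X, f Xstar ≤ f X)
    (hsmooth : ∀ X, ‖X - Xstar‖ ≤ ζ → ‖iteratedFDeriv ℝ 2 f X‖ ≤ β)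
    {Y : Matrix (Fin n) (Fin r) ℝ} (hY : ‖Y - Xstar‖ ≤ ζ)
    (hsc : ∀ X, ‖X - Xstar‖ ≤ ζ →
      α * ‖Y - Xstar‖ ^ 2 ≤ iteratedFDeriv ℝ 2 f X ![Y - Xstar, Y - Xstar]) :
    ‖Y - Xstar - (1 / β) • gradM f Y‖ ^ 2 ≤ (1 - α / β) * ‖Y - Xstar‖ ^ 2 := by
  set G := gradM f Y
  set p := fderiv ℝ f Y (Y - Xstar)
  have hG : fderiv ℝ f Y G = ‖G‖ ^ 2 := fderiv_apply_gradM_self f Y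
  have hB : ∀ {X}, X ∈ Metric.closedBall Xstar ζ ↔ ‖X - Xstar‖ ≤ ζ := mem_closedBall_iff_norm
  have hYB : Y ∈ Metric.closedBall Xstar ζ := hB.2 hY
  have hXstarB : Xstar ∈ Metric.closedBall Xstar ζ :=
    hB.2 (by simpa using (norm_nonneg _).trans hY)
  have hlow : f Y - f Xstar + α / 2 * ‖Y - Xstar‖ ^ 2 ≤ p :=
    hf.sub_add_half_mul_sq_le_fderiv (convex_closedBall _ _) hXstarB hYB
      fun X hX => hsc X (hB.1 hX)
  have hdesc : ∀ w, 0 ≤ w → w * ‖G‖ ^ 2 ≤ 2 * p →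
      w * ‖G‖ ^ 2 - β / 2 * (w ^ 2 * ‖G‖ ^ 2) ≤ f Y - f Xstar := by
    intro w hw hwG
    -- A step short enough not to increase the distance to `Xstar` stays in the ball.
    have hstep : Y - w • G ∈ Metric.closedBall Xstar ζ := by
      refine hB.2 (le_trans ?_ hY)
      refine (pow_le_pow_iff_left₀ (norm_nonneg _) (norm_nonneg _) two_ne_zero).1 ?_
      rw [sub_right_comm, norm_sub_smul_gradM_sq]
      nlinarith
    have h : f (Y - w • G) ≤ f Y - fderiv ℝ f Y (w • G) + β / 2 * ‖w • G‖ ^ 2 :=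
      hf.le_sub_fderiv_add_half_mul_sq (convex_closedBall _ _) hYB hstep
        fun X hX => hsmooth X (hB.1 hX)
    rw [map_smul, hG, norm_smul, mul_pow, Real.norm_eq_abs, sq_abs, smul_eq_mul] at h
    linarith [hmin (Y - w • G)]
  have hcrit : ‖Y - Xstar‖ ^ 2 = 0 → ‖G‖ ^ 2 = 0 := fun h => by
    have hYX : Y = Xstar := by simpa [sub_eq_zero] using h
    simp [G, hYX, IsLocalMin.gradM_eq_zero (Filter.Eventually.of_forall hmin)]
  have key := mul_add_div_le_two_mul_of_descent hα hβ (sq_nonneg _) hcrit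
    (sub_nonneg.2 (hmin Y)) hlow hdesc
  have hgap : (1 - α / β) * ‖Y - Xstar‖ ^ 2 -
      (‖Y - Xstar‖ ^ 2 - 2 * (1 / β) * p + (1 / β) ^ 2 * ‖G‖ ^ 2) =
      1 / β * (2 * p - (α * ‖Y - Xstar‖ ^ 2 + ‖G‖ ^ 2 / β)) := by
    field_simp
    ring
  rw [norm_sub_smul_gradM_sq]
  linarith [mul_nonneg (one_div_pos.2 hβ).le (sub_nonneg.2 key)]

theorem distF_sub_inv_smul_gradM_sq_le (hα : 0 < α) (hβ : 0 < β) (hf : ContDiff ℝ 2 f)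
    (hmin : ∀ X, f Xstar ≤ f X)
    (hsmooth : ∀ X, ‖X - Xstar‖ ≤ ζ → ‖iteratedFDeriv ℝ 2 f X‖ ≤ β)
    (hequiv : ∀ (X : Matrix (Fin n) (Fin r) ℝ) (H : Matrix (Fin r) (Fin r) ℝ),
      Hᵀ * H = 1 → gradM f (X * H) = gradM f X * H)
    (hsc : ∀ X : Matrix (Fin n) (Fin r) ℝ, ‖X - Xstar‖ ≤ ζ →
      ∀ (Z : Matrix (Fin n) (Fin r) ℝ) (HZ : Matrix (Fin r) (Fin r) ℝ), HZᵀ * HZ = 1 →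
        (∀ H' : Matrix (Fin r) (Fin r) ℝ, H'ᵀ * H' = 1 → ‖Z * HZ - Xstar‖ ≤ ‖Z * H' - Xstar‖) →
        α * ‖Z * HZ - Xstar‖ ^ 2 ≤ iteratedFDeriv ℝ 2 f X ![Z * HZ - Xstar, Z * HZ - Xstar])
    {U : Matrix (Fin n) (Fin r) ℝ} (hU : distF U Xstar ≤ ζ) :
    distF (U - (1 / β) • gradM f U) Xstar ^ 2 ≤ (1 - α / β) * distF U Xstar ^ 2 := by
  obtain ⟨H, hH, hHmin, hdist⟩ := exists_distF_eq U Xstar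
  have halign : (U - (1 / β) • gradM f U) * H - Xstar =
      U * H - Xstar - (1 / β) • gradM f (U * H) := by
    rw [hequiv U H hH, Matrix.sub_mul, Matrix.smul_mul]
    abel
  calc distF (U - (1 / β) • gradM f U) Xstar ^ 2
      ≤ ‖(U - (1 / β) • gradM f U) * H - Xstar‖ ^ 2 :=
        pow_le_pow_left₀ (distF_nonneg _ _) (distF_le _ _ hH) 2
    _ ≤ (1 - α / β) * distF U Xstar ^ 2 := by
        rw [halign, hdist]
        exact norm_sub_inv_smul_gradM_sq_le hα hβ hf hmin hsmooth (hdist ▸ hU)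
          fun X hX => hsc X hX U H hH hHmin

end GradientDescent

theorem le_pow_mul_of_le_mul {u : ℕ → ℝ} {q : ℝ} (hu : ∀ t, 0 ≤ u t)
    (h : ∀ t, u (t + 1) ≤ q * u t) (t : ℕ) : u t ≤ q ^ t * u 0 := by
  rcases le_or_gt 0 q with hq | hq
  · exact le_geom hq t fun k _ => h k
  · -- A negative ratio forces the whole sequence to vanish.
    have hzero : ∀ t, u t = 0 := fun t => by nlinarith [hu t, hu (t + 1), h t]
    simp [hzero]

theorem gd_convergence_up_to_rotation_general
    (n r : ℕ) (f : Matrix (Fin n) (Fin r) ℝ → ℝ)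
    (Xstar : Matrix (Fin n) (Fin r) ℝ)
    (α β ζ : ℝ) (hα : 0 < α) (hβ : 0 < β)
    (hf : ContDiff ℝ 2 f)
    (hmin : ∀ X, f Xstar ≤ f X)
    (hsmooth : ∀ X : Matrix (Fin n) (Fin r) ℝ, ‖X - Xstar‖ ≤ ζ →
      ‖iteratedFDeriv ℝ 2 f X‖ ≤ β)
    (hequiv : ∀ (X : Matrix (Fin n) (Fin r) ℝ) (H : Matrix (Fin r) (Fin r) ℝ),
      Hᵀ * H = 1 → gradM f (X * H) = gradM f X * H)
    (hsc : ∀ X : Matrix (Fin n) (Fin r) ℝ, ‖X - Xstar‖ ≤ ζ →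
      ∀ (Z : Matrix (Fin n) (Fin r) ℝ) (HZ : Matrix (Fin r) (Fin r) ℝ),
        HZᵀ * HZ = 1 →
        (∀ H' : Matrix (Fin r) (Fin r) ℝ, H'ᵀ * H' = 1 →
          ‖Z * HZ - Xstar‖ ≤ ‖Z * H' - Xstar‖) →
        α * ‖Z * HZ - Xstar‖ ^ 2 ≤
          iteratedFDeriv ℝ 2 f X ![Z * HZ - Xstar, Z * HZ - Xstar])
    (X : ℕ → Matrix (Fin n) (Fin r) ℝ)
    (hX0 : ‖X 0 - Xstar‖ ≤ ζ)
    (hupd : ∀ t : ℕ, X (t + 1) = X t - (1 / β) • gradM f (X t)) :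
    ∀ t : ℕ, distF (X t) Xstar ^ 2 ≤ (1 - α / β) ^ t * distF (X 0) Xstar ^ 2 := by
  have hstep : ∀ t, distF (X t) Xstar ≤ ζ →
      distF (X (t + 1)) Xstar ^ 2 ≤ (1 - α / β) * distF (X t) Xstar ^ 2 := fun t ht =>
    hupd t ▸ distF_sub_inv_smul_gradM_sq_le hα hβ hf hmin hsmooth hequiv hsc ht
  have hball : ∀ t, distF (X t) Xstar ≤ ζ := by
    intro t
    induction t with
    | zero => exact (distF_le (X 0) Xstar (H := 1) (by simp)).trans (by simpa using hX0)
    | succ t ih =>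
      have hsq : distF (X (t + 1)) Xstar ^ 2 ≤ distF (X t) Xstar ^ 2 :=
        (hstep t ih).trans (mul_le_of_le_one_left (sq_nonneg _)
          (sub_le_self _ (div_pos hα hβ).le))
      exact ((pow_le_pow_iff_left₀ (distF_nonneg _ _) (distF_nonneg _ _) two_ne_zero).1
        hsq).trans ih
  exact le_pow_mul_of_le_mul (fun t => sq_nonneg _) fun t => hstep t (hball t)

/-- **Linear convergence of gradient descent modulo rotational ambiguity.**
Let `f : ℝ^{n×r} → ℝ` be `C²` with global minimizer `X⋆`, `β`-smooth on the Frobenius ball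
`B_ζ(X⋆)`, rotation-equivariant (`∇f(XH) = ∇f(X)H` for orthonormal `H`), and satisfying the
rotation-adjusted strong convexity condition
`vec(ZH_Z − X⋆)ᵀ ∇²f(X) vec(ZH_Z − X⋆) ≥ α‖ZH_Z − X⋆‖_F²` on the ball. Then GD with step
size `1/β` started in the ball satisfies `dist²(X_t, X⋆) ≤ (1 − α/β)ᵗ dist²(X₀, X⋆)`. -/
theorem gd_convergence_up_to_rotation
    (n r : ℕ) (f : Matrix (Fin n) (Fin r) ℝ → ℝ)
    (Xstar : Matrix (Fin n) (Fin r) ℝ)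
    (α β ζ : ℝ) (hα : 0 < α) (hβ : 0 < β) (hζ : 0 < ζ)
    (hf : ContDiff ℝ 2 f)
    (hmin : ∀ X, f Xstar ≤ f X)
    (hsmooth : ∀ X : Matrix (Fin n) (Fin r) ℝ, ‖X - Xstar‖ ≤ ζ →
      ‖iteratedFDeriv ℝ 2 f X‖ ≤ β)
    (hequiv : ∀ (X : Matrix (Fin n) (Fin r) ℝ) (H : Matrix (Fin r) (Fin r) ℝ),
      Hᵀ * H = 1 → gradM f (X * H) = gradM f X * H)
    (hsc : ∀ X : Matrix (Fin n) (Fin r) ℝ, ‖X - Xstar‖ ≤ ζ →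
      ∀ (Z : Matrix (Fin n) (Fin r) ℝ) (HZ : Matrix (Fin r) (Fin r) ℝ),
        HZᵀ * HZ = 1 →
        (∀ H' : Matrix (Fin r) (Fin r) ℝ, H'ᵀ * H' = 1 →
          ‖Z * HZ - Xstar‖ ≤ ‖Z * H' - Xstar‖) →
        α * ‖Z * HZ - Xstar‖ ^ 2 ≤
          iteratedFDeriv ℝ 2 f X ![Z * HZ - Xstar, Z * HZ - Xstar])
    (X : ℕ → Matrix (Fin n) (Fin r) ℝ)
    (hX0 : ‖X 0 - Xstar‖ ≤ ζ)
    (hupd : ∀ t : ℕ, X (t + 1) = X t - (1 / β) • gradM f (X t)) :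
    ∀ t : ℕ, distF (X t) Xstar ^ 2 ≤ (1 - α / β) ^ t * distF (X 0) Xstar ^ 2 :=
  gd_convergence_up_to_rotation_general n r f Xstar α β ζ hα hβ hf hmin hsmooth hequiv hsc X hX0
    hupd
end

section
/- Let A₁, …, A_m ∈ ℝⁿˣⁿ and let M⋆ ∈ ℝⁿˣⁿ be positive semidefinite. Define the over-parameterized loss f_op(X) = (1/m)·Σᵢ (⟨Aᵢ, XXᵀ⟩ − ⟨Aᵢ, M⋆⟩)² for X ∈ ℝⁿˣⁿ. Suppose the feasibility set {M ∈ ℝⁿˣⁿ : M ⪰ 0 and ⟨Aᵢ, M⟩ = ⟨Aᵢ, M⋆⟩ for all 1 ≤ i ≤ m} equals the singleton {M⋆}. Then every local minimum X of f_op satisfies XXᵀ = M⋆. -/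
open Matrix

/-!
Write `r = 𝒜(XXᵀ) − 𝒜(M⋆)` for the residual at a local minimum `X` and `ℓ(M) = ⟨r, 𝒜(M)⟩`.
Expanding the loss along `X + tD` gives the first-order condition `ℓ(DXᵀ + XDᵀ) = 0` for every
`D`, and the second-order condition `ℓ(DDᵀ) ≥ 0` whenever `DXᵀ = 0`. Hence `ℓ(vvᵀ) ≥ 0` for
every `v`: if `X` is invertible, `vvᵀ = DXᵀ + XDᵀ` for `D = ½ vvᵀX⁻ᵀ`, so `ℓ(vvᵀ) = 0`; otherwise
`D = vwᵀ` with `Xw = 0` gives `ℓ(DDᵀ) = ‖w‖² ℓ(vvᵀ) ≥ 0`. Thus `ℓ` is nonnegative on positive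
semidefinite matrices, and `D = X` gives `ℓ(XXᵀ) = 0`, so `‖r‖² = ℓ(XXᵀ) − ℓ(M⋆) ≤ 0`. With
`r = 0`, the matrix `XXᵀ ⪰ 0` is feasible, hence equal to `M⋆`.
-/

open Filter Topology

theorem eq_zero_of_eventually_nonneg_mul {g : ℝ → ℝ} (hg : ContinuousAt g 0)
    (h : ∀ᶠ t in 𝓝 0, 0 ≤ t * g t) : g 0 = 0 := by
  have hright : ∀ᶠ t in 𝓝[>] 0, 0 ≤ g t := by
    filter_upwards [nhdsWithin_le_nhds h, self_mem_nhdsWithin] with t ht (htpos : 0 < t)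
    exact nonneg_of_mul_nonneg_right ht htpos
  have hleft : ∀ᶠ t in 𝓝[<] 0, g t ≤ 0 := by
    filter_upwards [nhdsWithin_le_nhds h, self_mem_nhdsWithin] with t ht (htneg : t < 0)
    exact nonpos_of_mul_nonneg_right ht htneg
  exact le_antisymm (le_of_tendsto (hg.mono_left nhdsWithin_le_nhds) hleft)
    (ge_of_tendsto (hg.mono_left nhdsWithin_le_nhds) hright)

theorem nonneg_of_eventually_nonneg_sq_mul {g : ℝ → ℝ} (hg : ContinuousAt g 0)
    (h : ∀ᶠ t in 𝓝 0, 0 ≤ t ^ 2 * g t) : 0 ≤ g 0 := by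
  refine ge_of_tendsto (hg.mono_left (nhdsWithin_le_nhds (s := Set.Ioi 0))) ?_
  filter_upwards [nhdsWithin_le_nhds h, self_mem_nhdsWithin] with t ht (htpos : 0 < t)
  exact nonneg_of_mul_nonneg_right ht (by positivity)

theorem IsLocalMin.optimality_conditions_sum_sq_quadratic {ι : Type*} [Fintype ι]
    {r s c : ι → ℝ} (h : IsLocalMin (fun t : ℝ => ∑ i, (r i + t * s i + t ^ 2 * c i) ^ 2) 0) :
    r ⬝ᵥ s = 0 ∧ 0 ≤ s ⬝ᵥ s + 2 * (r ⬝ᵥ c) := by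
  set q : ℝ → ℝ := fun t => s ⬝ᵥ s + 2 * (r ⬝ᵥ c) + t * (2 * (s ⬝ᵥ c) + t * (c ⬝ᵥ c))
  have hexpand : ∀ t : ℝ, ∑ i, (r i + t * s i + t ^ 2 * c i) ^ 2 - ∑ i, r i ^ 2
      = t * (2 * (r ⬝ᵥ s) + t * q t) := by
    intro t
    simp only [q, dotProduct, Finset.mul_sum, ← Finset.sum_add_distrib, ← Finset.sum_sub_distrib]
    exact Finset.sum_congr rfl fun i _ => by ring
  have hincr : ∀ᶠ t in 𝓝 0, 0 ≤ t * (2 * (r ⬝ᵥ s) + t * q t) := by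
    filter_upwards [h] with t ht
    rw [← hexpand, sub_nonneg]
    simpa using ht
  have hq : Continuous q := by fun_prop
  have hfirst : r ⬝ᵥ s = 0 := by
    have := eq_zero_of_eventually_nonneg_mul (g := fun t => 2 * (r ⬝ᵥ s) + t * q t)
      (by fun_prop) hincr
    linarith
  have hsecond : ∀ᶠ t in 𝓝 0, 0 ≤ t ^ 2 * q t := by
    filter_upwards [hincr] with t ht
    simpa [hfirst, sq, mul_assoc] using ht
  simpa [q, hfirst] using nonneg_of_eventually_nonneg_sq_mul hq.continuousAt hsecond

theorem Matrix.add_smul_mul_transpose_add_smul {n R : Type*} [Fintype n] [CommRing R]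
    (X D : Matrix n n R) (t : R) :
    (X + t • D) * (X + t • D)ᵀ = X * Xᵀ + t • (D * Xᵀ + X * Dᵀ) + t ^ 2 • (D * Dᵀ) := by
  simp only [transpose_add, transpose_smul, add_mul, mul_add, Matrix.smul_mul, Matrix.mul_smul,
    smul_smul]
  module

theorem Matrix.exists_mul_transpose_add_eq {n K : Type*} [Fintype n] [DecidableEq n] [Field K]
    [NeZero (2 : K)] {X S : Matrix n n K} (hX : IsUnit X.det) (hS : Sᵀ = S) :
    ∃ D : Matrix n n K, D * Xᵀ + X * Dᵀ = S := by
  have hXt : IsUnit Xᵀ.det := by rwa [det_transpose]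
  refine ⟨(2⁻¹ : K) • S * Xᵀ⁻¹, ?_⟩
  have hDX : (2⁻¹ : K) • S * Xᵀ⁻¹ * Xᵀ = (2⁻¹ : K) • S := by
    rw [Matrix.mul_assoc, nonsing_inv_mul _ hXt, Matrix.mul_one]
  rw [← transpose_transpose X, ← transpose_mul, transpose_transpose, hDX, transpose_smul, hS,
    ← add_smul, ← two_mul, mul_inv_cancel₀ two_ne_zero, one_smul]

theorem Matrix.PosSemidef.nonneg_of_forall_nonneg_vecMulVec {n : Type*} [Fintype n]
    {M : Matrix n n ℝ} (hM : M.PosSemidef) (f : Matrix n n ℝ →ₗ[ℝ] ℝ)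
    (hf : ∀ v, 0 ≤ f (vecMulVec v v)) : 0 ≤ f M := by
  obtain ⟨k, v, rfl⟩ := posSemidef_iff_eq_sum_vecMulVec.mp hM
  rw [map_sum]
  exact Finset.sum_nonneg fun i _ => hf (v i)

section

variable {ι n : Type*} [Fintype n] (L : Matrix n n ℝ →ₗ[ℝ] ι → ℝ) (Mstar : Matrix n n ℝ)

def sensingResidual (X : Matrix n n ℝ) : ι → ℝ := L (X * Xᵀ) - L Mstar

theorem sensingResidual_add_smul (X D : Matrix n n ℝ) (t : ℝ) :
    sensingResidual L Mstar (X + t • D) =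
      sensingResidual L Mstar X + t • L (D * Xᵀ + X * Dᵀ) + t ^ 2 • L (D * Dᵀ) := by
  simp only [sensingResidual, add_smul_mul_transpose_add_smul, map_add, map_smul]
  abel

variable [Fintype ι]

def sensingLoss (X : Matrix n n ℝ) : ℝ := ∑ i, sensingResidual L Mstar X i ^ 2

variable {L Mstar} {X : Matrix n n ℝ}

theorem IsLocalMin.optimality_conditions_sensingLoss (hX : IsLocalMin (sensingLoss L Mstar) X)
    (D : Matrix n n ℝ) :
    sensingResidual L Mstar X ⬝ᵥ L (D * Xᵀ + X * Dᵀ) = 0 ∧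
      0 ≤ L (D * Xᵀ + X * Dᵀ) ⬝ᵥ L (D * Xᵀ + X * Dᵀ) +
        2 * (sensingResidual L Mstar X ⬝ᵥ L (D * Dᵀ)) := by
  have hline : IsLocalMin (sensingLoss L Mstar ∘ fun t : ℝ => X + t • D) 0 := by
    refine IsLocalMin.comp_continuous ?_ (by fun_prop)
    rwa [zero_smul, add_zero]
  have hloss : sensingLoss L Mstar ∘ (fun t : ℝ => X + t • D) = fun t => ∑ i,
      (sensingResidual L Mstar X i + t * L (D * Xᵀ + X * Dᵀ) i + t ^ 2 * L (D * Dᵀ) i) ^ 2 := by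
    ext t
    simp only [Function.comp_apply, sensingLoss, sensingResidual_add_smul, Pi.add_apply,
      Pi.smul_apply, smul_eq_mul]
  rw [hloss] at hline
  exact hline.optimality_conditions_sum_sq_quadratic

theorem IsLocalMin.sensingResidual_dotProduct_eq_zero (hX : IsLocalMin (sensingLoss L Mstar) X)
    (D : Matrix n n ℝ) : sensingResidual L Mstar X ⬝ᵥ L (D * Xᵀ + X * Dᵀ) = 0 :=
  (hX.optimality_conditions_sensingLoss D).1

theorem IsLocalMin.sensingResidual_dotProduct_nonneg (hX : IsLocalMin (sensingLoss L Mstar) X)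
    {D : Matrix n n ℝ} (hD : D * Xᵀ = 0) : 0 ≤ sensingResidual L Mstar X ⬝ᵥ L (D * Dᵀ) := by
  have h := (hX.optimality_conditions_sensingLoss D).2
  have hXD : X * Dᵀ = 0 := by rw [← transpose_transpose X, ← transpose_mul, hD, transpose_zero]
  simp only [hD, hXD, add_zero, map_zero, dotProduct_zero, zero_add] at h
  linarith

theorem IsLocalMin.sensingResidual_dotProduct_vecMulVec_nonneg [DecidableEq n]
    (hX : IsLocalMin (sensingLoss L Mstar) X) (v : n → ℝ) :
    0 ≤ sensingResidual L Mstar X ⬝ᵥ L (vecMulVec v v) := by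
  by_cases hdet : IsUnit X.det
  · obtain ⟨D, hD⟩ := exists_mul_transpose_add_eq hdet (transpose_vecMulVec v v)
    rw [← hD, hX.sensingResidual_dotProduct_eq_zero]
  · obtain ⟨w, hw, hXw⟩ := exists_mulVec_eq_zero_iff.mpr (by simpa using hdet)
    have hwpos : 0 < w ⬝ᵥ w := by simpa using dotProduct_self_star_pos_iff.mpr hw
    have hD : vecMulVec v w * Xᵀ = 0 := by rw [vecMulVec_mul, vecMul_transpose, hXw, vecMulVec_zero]
    have h := hX.sensingResidual_dotProduct_nonneg hD
    rw [transpose_vecMulVec, vecMulVec_mul_vecMulVec, vecMulVec_smul, map_smul,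
      dotProduct_smul, smul_eq_mul] at h
    exact nonneg_of_mul_nonneg_right h hwpos

theorem IsLocalMin.sensingResidual_eq_zero [DecidableEq n]
    (hX : IsLocalMin (sensingLoss L Mstar) X) (hMstar : Mstar.PosSemidef) :
    sensingResidual L Mstar X = 0 := by
  set r := sensingResidual L Mstar X
  have hℓXX : r ⬝ᵥ L (X * Xᵀ) = 0 := by
    have := hX.sensingResidual_dotProduct_eq_zero X
    rw [map_add, dotProduct_add] at this
    linarith
  have hℓMstar : 0 ≤ r ⬝ᵥ L Mstar :=
    hMstar.nonneg_of_forall_nonneg_vecMulVec (dotProductBilin ℝ ℝ r ∘ₗ L)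
      hX.sensingResidual_dotProduct_vecMulVec_nonneg
  have hrr : r ⬝ᵥ r = r ⬝ᵥ L (X * Xᵀ) - r ⬝ᵥ L Mstar := dotProduct_sub _ _ _
  have hrr_nonneg : 0 ≤ r ⬝ᵥ r := by simpa using dotProduct_self_star_nonneg r
  exact dotProduct_self_eq_zero.mp (by linarith)

end

theorem continuous_frobNorm {p q : ℕ} : Continuous (frobNorm : Matrix (Fin p) (Fin q) ℝ → ℝ) := by
  unfold frobNorm; fun_prop

theorem isLocalMin_of_forall_frobNorm_sub_le {p q : ℕ} {f : Matrix (Fin p) (Fin q) ℝ → ℝ}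
    {X : Matrix (Fin p) (Fin q) ℝ}
    (h : ∃ ε > (0 : ℝ), ∀ X', frobNorm (X' - X) ≤ ε → f X ≤ f X') : IsLocalMin f X := by
  obtain ⟨ε, hε, hX⟩ := h
  have hlim : Tendsto (fun X' => frobNorm (X' - X)) (𝓝 X) (𝓝 0) := by
    simpa [Function.comp_def, frobNorm] using
      (continuous_frobNorm.comp (continuous_sub_right X)).tendsto X
  filter_upwards [hlim.eventually_le_const hε] using hX

def sensingOperator {ι : Type*} {n : ℕ} (A : ι → Matrix (Fin n) (Fin n) ℝ) :
    Matrix (Fin n) (Fin n) ℝ →ₗ[ℝ] ι → ℝ where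
  toFun M i := mip (A i) M
  map_add' M N := by ext i; simp [mip, Matrix.mul_add]
  map_smul' c M := by ext i; simp [mip]

/-- **No spurious local minima for over-parameterized matrix sensing.**
Let `f_op(X) = (1/m) ∑ᵢ (⟨Aᵢ, XXᵀ⟩ − ⟨Aᵢ, M⋆⟩)²` for `X ∈ ℝ^{n×n}` and `M⋆ ⪰ 0`. If the
feasibility set `{M ⪰ 0 : ⟨Aᵢ, M⟩ = ⟨Aᵢ, M⋆⟩ ∀i}` is the singleton `{M⋆}`, then every local
minimum `X` of `f_op` satisfies `XXᵀ = M⋆`. -/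
theorem over_parameterized_sensing_no_spurious_local_minima
    (n m : ℕ)
    (A : Fin m → Matrix (Fin n) (Fin n) ℝ)
    (Mstar : Matrix (Fin n) (Fin n) ℝ)
    (hMstar : Mstar.PosSemidef)
    (hsingleton : {M : Matrix (Fin n) (Fin n) ℝ |
      M.PosSemidef ∧ ∀ i, mip (A i) M = mip (A i) Mstar} = {Mstar})
    (X : Matrix (Fin n) (Fin n) ℝ)
    (hlocal : ∃ ε > (0 : ℝ), ∀ X' : Matrix (Fin n) (Fin n) ℝ, frobNorm (X' - X) ≤ ε →
      (1 / (m : ℝ)) * ∑ i, (mip (A i) (X * Xᵀ) - mip (A i) Mstar) ^ 2 ≤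
      (1 / (m : ℝ)) * ∑ i, (mip (A i) (X' * X'ᵀ) - mip (A i) Mstar) ^ 2) :
    X * Xᵀ = Mstar := by
  have hfeasible : ∀ i, mip (A i) (X * Xᵀ) = mip (A i) Mstar := by
    obtain rfl | hm := Nat.eq_zero_or_pos m
    · exact fun i => i.elim0
    have hmin : IsLocalMin (sensingLoss (sensingOperator A) Mstar) X := by
      filter_upwards [isLocalMin_of_forall_frobNorm_sub_le
        (f := fun Y => 1 / (m : ℝ) * sensingLoss (sensingOperator A) Mstar Y) hlocal] with Y hY
      exact le_of_mul_le_mul_left hY (by positivity)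
    exact fun i => sub_eq_zero.mp (congrFun (hmin.sensingResidual_eq_zero hMstar) i)
  have hmem : X * Xᵀ ∈ {M : Matrix (Fin n) (Fin n) ℝ |
      M.PosSemidef ∧ ∀ i, mip (A i) M = mip (A i) Mstar} :=
    ⟨by simpa using posSemidef_self_mul_conjTranspose X, hfeasible⟩
  rwa [hsingleton] at hmem
end
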